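/- arXiv:math/0504058 — 9 statements merged into one kernel-verified Lean document; each statement's English description precedes it below -/
import Mathlib

section
/- For any positive reals a, s and any real A, the integral ∫₀ˣ t^A exp(a t^s) dt is asymptotically equal to (1/(a s)) x^{A+1-s} exp(a x^s) as x → ∞; that is, the ratio of the integral to (1/(a s)) x^{A+1-s} exp(a x^s) tends to 1. -/
/-!
Put `G x = x ^ (A + 1 - s) * exp (a * x ^ s) / (a * s)`. Then
`G' t = t ^ A * exp (a * t ^ s) * (1 + (A + 1 - s) / (a * s) * t ^ (-s))`, which is asymptotically
equivalent to the integrand, and `G → ∞`. Integrating an asymptotic equivalence between a function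
and a nonnegative function whose integral diverges preserves it (an integral form of L'Hôpital's
rule), so `∫₁ˣ` of the integrand is equivalent to `∫₁ˣ G' = G x - G 1`, hence to `G x`; the part
of the integral over `(0, 1)` is a constant, finite because `A > -1`.
-/

open MeasureTheory Filter Real Asymptotics Set Topology

theorem Asymptotics.IsLittleO.intervalIntegral_atTop {E : Type*} [NormedAddCommGroup E]
    [NormedSpace ℝ E] {f : ℝ → E} {g : ℝ → ℝ} {a : ℝ} (hfg : f =o[atTop] g)
    (hf : ∀ b ≥ a, IntervalIntegrable f volume a b)
    (hg : ∀ b ≥ a, IntervalIntegrable g volume a b) (hg_nonneg : ∀ᶠ t in atTop, 0 ≤ g t)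
    (hg_top : Tendsto (fun x => ∫ t in a..x, g t) atTop atTop) :
    (fun x => ∫ t in a..x, f t) =o[atTop] fun x => ∫ t in a..x, g t := by
  refine isLittleO_iff.2 fun ε hε => ?_
  obtain ⟨y, hy⟩ := eventually_atTop.1
    (((hfg.def (half_pos hε)).and hg_nonneg).and (eventually_ge_atTop a))
  have hay : a ≤ y := (hy y le_rfl).2
  filter_upwards [eventually_ge_atTop y, hg_top.eventually_ge_atTop
    ((‖∫ t in a..y, f t‖ + ε / 2 * |∫ t in a..y, g t|) / (ε / 2))] with x hyx hx
  have hax : a ≤ x := hay.trans hyx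
  have hC : ‖∫ t in a..y, f t‖ + ε / 2 * |∫ t in a..y, g t| ≤ ε / 2 * ∫ t in a..x, g t := by
    rwa [div_le_iff₀' (half_pos hε)] at hx
  have hG : 0 ≤ ∫ t in a..x, g t :=
    nonneg_of_mul_nonneg_right (le_trans (by positivity) hC) (half_pos hε)
  calc ‖∫ t in a..x, f t‖ = ‖(∫ t in a..y, f t) + ∫ t in y..x, f t‖ := by
        rw [intervalIntegral.integral_add_adjacent_intervals (hf y hay)
          ((hf y hay).symm.trans (hf x hax))]
    _ ≤ ‖∫ t in a..y, f t‖ + ∫ t in y..x, ε / 2 * g t := by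
        refine norm_add_le_of_le le_rfl (intervalIntegral.norm_integral_le_of_norm_le hyx
          (ae_of_all _ fun t ht => ?_) (((hg y hay).symm.trans (hg x hax)).const_mul _))
        obtain ⟨⟨hft, hgt⟩, -⟩ := hy t ht.1.le
        rwa [Real.norm_of_nonneg hgt] at hft
    _ = ‖∫ t in a..y, f t‖ + ε / 2 * ((∫ t in a..x, g t) - ∫ t in a..y, g t) := by
        rw [intervalIntegral.integral_const_mul,
          intervalIntegral.integral_interval_sub_left (hg x hax) (hg y hay)]
    _ ≤ ε * ‖∫ t in a..x, g t‖ := by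
        rw [Real.norm_of_nonneg hG]
        linarith [mul_le_mul_of_nonneg_left (neg_le_abs (∫ t in a..y, g t)) (half_pos hε).le]

theorem Asymptotics.IsEquivalent.intervalIntegral_atTop {f g : ℝ → ℝ} {a : ℝ}
    (hfg : f ~[atTop] g) (hf : ∀ b ≥ a, IntervalIntegrable f volume a b)
    (hg : ∀ b ≥ a, IntervalIntegrable g volume a b) (hg_nonneg : ∀ᶠ t in atTop, 0 ≤ g t)
    (hg_top : Tendsto (fun x => ∫ t in a..x, g t) atTop atTop) :
    (fun x => ∫ t in a..x, f t) ~[atTop] fun x => ∫ t in a..x, g t := by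
  refine (hfg.isLittleO.intervalIntegral_atTop (fun b hb => (hf b hb).sub (hg b hb)) hg
    hg_nonneg hg_top).congr' ?_ EventuallyEq.rfl
  filter_upwards [eventually_ge_atTop a] with x hx
  exact intervalIntegral.integral_sub (hf x hx) (hg x hx)

theorem Asymptotics.IsEquivalent.intervalIntegral_atTop_of_hasDerivAt {f g G : ℝ → ℝ} {a : ℝ}
    (hfg : f ~[atTop] g) (hf : ∀ b ≥ a, IntervalIntegrable f volume a b)
    (hG : ∀ x ≥ a, HasDerivAt G (g x) x) (hg : ContinuousOn g (Ici a))
    (hg_nonneg : ∀ᶠ t in atTop, 0 ≤ g t) (hG_top : Tendsto G atTop atTop) :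
    (fun x => ∫ t in a..x, f t) ~[atTop] G := by
  have hg_int : ∀ b ≥ a, IntervalIntegrable g volume a b := fun b hb =>
    (hg.mono Icc_subset_Ici_self).intervalIntegrable_of_Icc hb
  have hFTC : (fun x => ∫ t in a..x, g t) =ᶠ[atTop] fun x => G x - G a := by
    filter_upwards [eventually_ge_atTop a] with x hx
    refine intervalIntegral.integral_eq_sub_of_hasDerivAt (fun t ht => hG t ?_) (hg_int x hx)
    exact (uIcc_of_le hx ▸ ht).1
  have hG_norm : Tendsto (norm ∘ G) atTop atTop := tendsto_norm_atTop_atTop.comp hG_top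
  refine (hfg.intervalIntegral_atTop hf hg_int hg_nonneg
    ((tendsto_atTop_add_const_right _ (-G a) hG_top).congr' hFTC.symm)).trans ?_
  exact (IsEquivalent.refl.sub_isLittleO (isLittleO_const_left.2 (Or.inr hG_norm))).congr_left
    hFTC.symm

theorem tendsto_const_mul_rpow_mul_exp_mul_rpow_atTop {a s c : ℝ} (b : ℝ) (ha : 0 < a)
    (hs : 0 < s) (hc : 0 < c) : Tendsto (fun x => c * x ^ b * exp (a * x ^ s)) atTop atTop := by
  refine (((tendsto_exp_mul_div_rpow_atTop (-b / s) a ha).comp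
    (tendsto_rpow_atTop hs)).const_mul_atTop hc).congr' ?_
  filter_upwards [eventually_ge_atTop 0] with x hx
  rw [Function.comp_apply, ← rpow_mul hx, mul_div_cancel₀ _ hs.ne', rpow_neg hx, div_inv_eq_mul,
    mul_assoc, mul_comm (exp _)]

theorem hasDerivAt_rpow_mul_exp_mul_rpow {a s A t : ℝ} (ha : a ≠ 0) (hs : s ≠ 0) (ht : 0 < t) :
    HasDerivAt (fun x => 1 / (a * s) * x ^ (A + 1 - s) * exp (a * x ^ s))
      (t ^ A * exp (a * t ^ s) * (1 + (A + 1 - s) / (a * s) * t ^ (-s))) t := by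
  have hpow : ∀ p, HasDerivAt (fun x => x ^ p) (p * t ^ (p - 1)) t := fun p =>
    hasDerivAt_rpow_const (Or.inl ht.ne')
  refine (((hpow (A + 1 - s)).const_mul (1 / (a * s))).mul
    (((hpow s).const_mul a).exp)).congr_deriv ?_
  have e1 : t ^ (A + 1 - s - 1) = t ^ A * t ^ (-s) := by
    rw [← rpow_add ht]; ring_nf
  have e2 : t ^ (A + 1 - s) * t ^ (s - 1) = t ^ A := by
    rw [← rpow_add ht]; ring_nf
  rw [e1, ← e2]
  field_simp
  ring

theorem intervalIntegrable_rpow_mul_exp_mul_rpow {A s : ℝ} (a : ℝ) (hA : -1 < A) (hs : 0 ≤ s)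
    (b c : ℝ) : IntervalIntegrable (fun t => t ^ A * exp (a * t ^ s)) volume b c :=
  (intervalIntegral.intervalIntegrable_rpow' hA).mul_continuousOn
    (continuous_const.mul (continuous_rpow_const hs)).rexp.continuousOn

theorem isEquivalent_intervalIntegral_rpow_mul_exp_mul_rpow {a s A : ℝ} (ha : 0 < a) (hs : 0 < s)
    (hA : -1 < A) :
    (fun x => ∫ t in (1 : ℝ)..x, t ^ A * exp (a * t ^ s)) ~[atTop]
      fun x => 1 / (a * s) * x ^ (A + 1 - s) * exp (a * x ^ s) := by
  set f : ℝ → ℝ := fun t => t ^ A * exp (a * t ^ s)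
  set r : ℝ → ℝ := fun t => 1 + (A + 1 - s) / (a * s) * t ^ (-s)
  have hr : Tendsto r atTop (𝓝 1) := by
    simpa [r] using tendsto_const_nhds.add
      ((tendsto_rpow_neg_atTop hs).const_mul ((A + 1 - s) / (a * s)))
  refine IsEquivalent.intervalIntegral_atTop_of_hasDerivAt (g := f * r) ?_
    (fun b _ => intervalIntegrable_rpow_mul_exp_mul_rpow a hA hs.le 1 b)
    (fun x hx => hasDerivAt_rpow_mul_exp_mul_rpow ha.ne' hs.ne' (by linarith)) ?_ ?_ ?_
  · simpa using (IsEquivalent.refl.mul ((isEquivalent_const_iff_tendsto one_ne_zero).2 hr)).symm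
  · have hne : ∀ t ∈ Ici (1 : ℝ), t ≠ 0 := fun t ht => (zero_lt_one.trans_le ht).ne'
    fun_prop (disch := exact hne)
  · filter_upwards [eventually_gt_atTop 0, hr.eventually_const_lt one_pos] with t ht hrt
    exact mul_nonneg (mul_nonneg (rpow_nonneg ht.le _) (exp_pos _).le) hrt.le
  · exact tendsto_const_mul_rpow_mul_exp_mul_rpow_atTop _ ha hs (by positivity)

theorem integral_exp_rpow_asymptotic (a s A : ℝ) (ha : 0 < a) (hs : 0 < s) (hA : -1 < A) :
    Tendsto (fun x : ℝ =>
        (∫ t in Set.Ioo (0 : ℝ) x, t ^ A * Real.exp (a * t ^ s)) /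
          ((1 / (a * s)) * x ^ (A + 1 - s) * Real.exp (a * x ^ s)))
      atTop (nhds 1) := by
  set f : ℝ → ℝ := fun t => t ^ A * exp (a * t ^ s)
  have hf := intervalIntegrable_rpow_mul_exp_mul_rpow a hA hs.le
  have hsplit : (fun x => ∫ t in Ioo 0 x, f t) =ᶠ[atTop]
      fun x => (∫ t in (1 : ℝ)..x, f t) + ∫ t in (0 : ℝ)..1, f t := by
    filter_upwards [eventually_ge_atTop 0] with x hx
    rw [← integral_Ioc_eq_integral_Ioo, ← intervalIntegral.integral_of_le hx, add_comm,
      intervalIntegral.integral_add_adjacent_intervals (hf 0 1) (hf 1 x)]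
  have hG_top := tendsto_const_mul_rpow_mul_exp_mul_rpow_atTop (A + 1 - s) ha hs
    (one_div_pos.2 (mul_pos ha hs))
  have hequiv := (isEquivalent_intervalIntegral_rpow_mul_exp_mul_rpow ha hs hA
    |>.add_const_of_norm_tendsto_atTop (c := ∫ t in (0 : ℝ)..1, f t)
      (tendsto_norm_atTop_atTop.comp hG_top))
  refine (isEquivalent_iff_tendsto_one ?_).1 (hequiv.congr_left hsplit.symm)
  filter_upwards [eventually_gt_atTop 0] with x hx
  positivity
end

section
/- For any positive reals a, s and any real A, the tail integral ∫ₓ^∞ t^A exp(-a t^s) dt is asymptotically equal to (1/(a s)) x^{A+1-s} exp(-a x^s) as x → ∞. -/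
/-!
Both `x ↦ ∫_x^∞ t^A e^{-a t^s} dt` and `g x = x^{A+1-s} e^{-a x^s} / (a s)` tend to `0` at
infinity, and their derivatives are `-x^A e^{-a x^s}` and
`-x^A e^{-a x^s} (1 - (A+1-s)/(a s) · x^{-s})`.
The ratio of the derivatives tends to `1`, so L'Hôpital's rule gives the asymptotics.
-/

open MeasureTheory Filter Real Set Topology Asymptotics

theorem hasDerivAt_integral_Ioi {E : Type*} [NormedAddCommGroup E] [NormedSpace ℝ E]
    [CompleteSpace E] {f : ℝ → E} {c x : ℝ} (hf : IntegrableOn f (Ioi c))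
    (hcont : ContinuousOn f (Ioi c)) (hx : c < x) :
    HasDerivAt (fun y => ∫ t in Ioi y, f t) (-f x) x := by
  have hprimitive : HasDerivAt (fun y => ∫ t in c..y, f t) (f x) x :=
    intervalIntegral.integral_hasDerivAt_right
      ((intervalIntegrable_iff_integrableOn_Ioc_of_le hx.le).2 (hf.mono_set Ioc_subset_Ioi_self))
      (hcont.stronglyMeasurableAtFilter isOpen_Ioi x hx)
      (hcont.continuousAt (Ioi_mem_nhds hx))
  have htail : (fun y => ∫ t in Ioi y, f t) =ᶠ[𝓝 x]
      fun y => (∫ t in Ioi c, f t) - ∫ t in c..y, f t := by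
    filter_upwards [Ioi_mem_nhds hx] with y hy
    rw [← intervalIntegral.integral_Ioi_sub_Ioi hf (le_of_lt hy), sub_sub_cancel]
  simpa using ((hasDerivAt_const x _).sub hprimitive).congr_of_eventuallyEq htail

section

variable {a s : ℝ}

theorem tendsto_rpow_mul_exp_neg_mul_rpow_atTop_nhds_zero (B : ℝ) (ha : 0 < a) (hs : 0 < s) :
    Tendsto (fun x : ℝ => x ^ B * exp (-(a * x ^ s))) atTop (𝓝 0) := by
  refine ((tendsto_rpow_mul_exp_neg_mul_atTop_nhds_zero (B / s) a ha).comp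
    (tendsto_rpow_atTop hs)).congr' ?_
  filter_upwards [eventually_gt_atTop 0] with x hx
  rw [Function.comp_apply, ← rpow_mul hx.le, mul_div_cancel₀ _ hs.ne', neg_mul]

theorem continuousOn_rpow_mul_exp_neg_mul_rpow (A : ℝ) :
    ContinuousOn (fun t : ℝ => t ^ A * exp (-(a * t ^ s))) (Ioi 0) := by
  have hpow (p : ℝ) : ContinuousOn (fun t : ℝ => t ^ p) (Ioi 0) :=
    continuousOn_id.rpow_const fun t ht => Or.inl (ne_of_gt ht)
  exact (hpow A).mul (((hpow s).const_smul a).neg.rexp)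

theorem integrableOn_Ioi_rpow_mul_exp_neg_mul_rpow (A : ℝ) (ha : 0 < a) (hs : 0 < s) {c : ℝ}
    (hc : 0 < c) : IntegrableOn (fun t : ℝ => t ^ A * exp (-(a * t ^ s))) (Ioi c) := by
  have hdecay : (fun t : ℝ => t ^ A * exp (-(a * t ^ s))) =O[atTop] fun t => t ^ (-2 : ℝ) := by
    have hbounded :=
      (tendsto_rpow_mul_exp_neg_mul_rpow_atTop_nhds_zero (A + 2) ha hs).isBigO_one ℝ
    refine (((isBigO_refl (fun t : ℝ => t ^ (-2 : ℝ)) atTop).mul hbounded).congr' ?_ ?_)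
    · filter_upwards [eventually_gt_atTop 0] with t ht
      rw [← mul_assoc, ← rpow_add ht]
      ring_nf
    · simp
  have hcont : ContinuousOn (fun t : ℝ => t ^ A * exp (-(a * t ^ s))) (Ici c) :=
    (continuousOn_rpow_mul_exp_neg_mul_rpow A).mono fun t ht => hc.trans_le ht
  exact (integrableOn_Ici_iff_integrableOn_Ioi).mp <|
    (hcont.locallyIntegrableOn measurableSet_Ici).integrableOn_of_isBigO_atTop hdecay
      (integrableAtFilter_rpow_atTop_iff.mpr (by norm_num))

theorem hasDerivAt_one_div_mul_rpow_mul_exp_neg_mul_rpow (A : ℝ) (ha : a ≠ 0) (hs : s ≠ 0)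
    {x : ℝ} (hx : 0 < x) :
    HasDerivAt (fun y => 1 / (a * s) * y ^ (A + 1 - s) * exp (-(a * y ^ s)))
      (-(x ^ A * exp (-(a * x ^ s))) * (1 - (A + 1 - s) / (a * s) * x ^ (-s))) x := by
  have hpow := hasDerivAt_rpow_const (x := x) (p := A + 1 - s) (Or.inl hx.ne')
  have hexp : HasDerivAt (fun y => exp (-(a * y ^ s)))
      (exp (-(a * x ^ s)) * -(a * (s * x ^ (s - 1)))) x :=
    ((hasDerivAt_rpow_const (Or.inl hx.ne')).const_mul a).neg.exp
  refine ((hpow.const_mul (1 / (a * s))).mul hexp).congr_deriv ?_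
  have hpow_sub : x ^ (A + 1 - s - 1) = x ^ A * x ^ (-s) := by rw [← rpow_add hx]; ring_nf
  have hpow_add : x ^ (A + 1 - s) * x ^ (s - 1) = x ^ A := by rw [← rpow_add hx]; ring_nf
  rw [hpow_sub]
  field_simp
  linear_combination (-(s * a)) * hpow_add

end

theorem tail_integral_exp_neg_rpow_asymptotic (a s A : ℝ) (ha : 0 < a) (hs : 0 < s) :
    Tendsto (fun x : ℝ =>
        (∫ t in Set.Ioi x, t ^ A * Real.exp (-(a * t ^ s))) /
          ((1 / (a * s)) * x ^ (A + 1 - s) * Real.exp (-(a * x ^ s))))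
      atTop (nhds 1) := by
  set f : ℝ → ℝ := fun t => t ^ A * exp (-(a * t ^ s))
  set correction : ℝ → ℝ := fun x => 1 - (A + 1 - s) / (a * s) * x ^ (-s)
  have hcorrection : Tendsto correction atTop (𝓝 1) := by
    simpa [correction] using
      ((tendsto_rpow_neg_atTop hs).const_mul ((A + 1 - s) / (a * s))).const_sub 1
  have htail_deriv : ∀ᶠ x in atTop, HasDerivAt (fun y => ∫ t in Ioi y, f t) (-f x) x := by
    filter_upwards [eventually_gt_atTop 1] with x hx
    exact hasDerivAt_integral_Ioi (integrableOn_Ioi_rpow_mul_exp_neg_mul_rpow A ha hs one_pos)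
      ((continuousOn_rpow_mul_exp_neg_mul_rpow A).mono (Ioi_subset_Ioi zero_le_one)) hx
  have hmain_deriv : ∀ᶠ x in atTop, HasDerivAt
      (fun y => 1 / (a * s) * y ^ (A + 1 - s) * exp (-(a * y ^ s))) (-f x * correction x) x := by
    filter_upwards [eventually_gt_atTop 0] with x hx
    exact hasDerivAt_one_div_mul_rpow_mul_exp_neg_mul_rpow A ha.ne' hs.ne' hx
  have hf_ne : ∀ᶠ x in atTop, -f x ≠ 0 := by
    filter_upwards [eventually_gt_atTop 0] with x hx
    exact neg_ne_zero.2 (by positivity)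
  have hmain_deriv_ne : ∀ᶠ x in atTop, -f x * correction x ≠ 0 := by
    filter_upwards [hf_ne, hcorrection.eventually_ne one_ne_zero] with x hf hc
    exact mul_ne_zero hf hc
  have hmain :
      Tendsto (fun x => 1 / (a * s) * x ^ (A + 1 - s) * exp (-(a * x ^ s))) atTop (𝓝 0) := by
    simpa [mul_assoc] using
      (tendsto_rpow_mul_exp_neg_mul_rpow_atTop_nhds_zero (A + 1 - s) ha hs).const_mul (1 / (a * s))
  refine HasDerivAt.lhopital_zero_atTop htail_deriv hmain_deriv hmain_deriv_ne
    (tendsto_integral_Ioi_zero tendsto_id) hmain ?_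
  refine (inv_one (G := ℝ) ▸ hcorrection.inv₀ one_ne_zero).congr' ?_
  filter_upwards [hf_ne] with x hf
  rw [div_mul_cancel_left₀ hf]
end

section
/- For all z with 0 ≤ z < 1 and all real x, the series ∑_{k=0}^∞ z^k (1/(√π · k! · 2^k)) H_k(x)² e^{-x²} converges and equals (1/√(π(1-z²))) · exp(-x² (1-z)/(1+z)), where H_k are the (physicists') Hermite polynomials. -/
open MeasureTheory Real

/-- The physicists' Hermite polynomials, via the Rodrigues formula
`H_k(x) = (-1)^k e^{x²} (d/dx)^k e^{-x²}`. -/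
noncomputable def physHermite (k : ℕ) (x : ℝ) : ℝ :=
  (-1 : ℝ) ^ k * Real.exp (x ^ 2) * iteratedDeriv k (fun y => Real.exp (-(y ^ 2))) x

/-!
Put `I_k(x) = ∫ (x + i t)^k e^{-t²} dt`. Integration by parts shows that `2^k I_k(x) / √π`
satisfies the three-term recurrence of `H_k(x)`, so `√π H_k(x) = 2^k I_k(x)`, and expanding
`e^{w(x + i t)}` gives `∑ w^k/k! I_k(x) = √π e^{wx - w²/4}`. In `∑ (2z)^k/k! I_k(x)²` replace one
factor `I_k(x)` by its integral over `s` and sum under the integral sign: this is the generating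
function at `w = 2z(x + i s)`, leaving a Gaussian integral in `s` equal to
`π (1 - z²)^{-1/2} e^{2x²z/(1+z)}`. Both interchanges of sum and integral rest on
`∫ |x + i t|^k e^{-t²} dt ≤ √(k!/l^k) e^{l x²/2} √(π/(1 - l/2))` for `0 < l < 2`,
used with `l = 1 + |z|` for the second one, where `|z| < 1` makes the series geometric.
-/

open Complex Nat

lemma hasDerivAt_exp_neg_sq (x : ℝ) :
    HasDerivAt (fun y => rexp (-(y ^ 2))) (-2 * x * rexp (-(x ^ 2))) x := by
  convert ((hasDerivAt_pow 2 x).fun_neg).exp using 1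
  push_cast
  ring

lemma hasDerivAt_iteratedDeriv_exp_neg_sq (n : ℕ) (x : ℝ) :
    HasDerivAt (iteratedDeriv n fun y => rexp (-(y ^ 2)))
      (iteratedDeriv (n + 1) (fun y => rexp (-(y ^ 2))) x) x := by
  rw [iteratedDeriv_succ]
  refine (ContDiff.differentiable_iteratedDeriv n ?_ (WithTop.coe_lt_top _) x).hasDerivAt
  fun_prop

lemma iteratedDeriv_exp_neg_sq_succ_succ (n : ℕ) (x : ℝ) :
    iteratedDeriv (n + 2) (fun y => rexp (-(y ^ 2))) x =
      -2 * x * iteratedDeriv (n + 1) (fun y => rexp (-(y ^ 2))) x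
        - 2 * (n + 1) * iteratedDeriv n (fun y => rexp (-(y ^ 2))) x := by
  induction n generalizing x with
  | zero =>
    have h := ((hasDerivAt_id' x).const_mul (-2)).fun_mul (hasDerivAt_exp_neg_sq x)
    rw [iteratedDeriv_succ, iteratedDeriv_one, iteratedDeriv_zero,
      funext fun y => (hasDerivAt_exp_neg_sq y).deriv, h.deriv]
    ring
  | succ n ih =>
    have h := (((hasDerivAt_id' x).const_mul (-2)).fun_mul
      (hasDerivAt_iteratedDeriv_exp_neg_sq (n + 1) x)).fun_sub
      ((hasDerivAt_iteratedDeriv_exp_neg_sq n x).const_mul (2 * ((n : ℝ) + 1)))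
    calc _ = deriv (iteratedDeriv (n + 2) fun y => rexp (-(y ^ 2))) x := by
          rw [iteratedDeriv_succ]
      _ = _ := (h.congr_of_eventuallyEq (.of_forall ih)).deriv
      _ = _ := by push_cast; ring

lemma physHermite_zero (x : ℝ) : physHermite 0 x = 1 := by
  simp [physHermite, ← Real.exp_add]

lemma physHermite_one (x : ℝ) : physHermite 1 x = 2 * x := by
  rw [physHermite, iteratedDeriv_one, (hasDerivAt_exp_neg_sq x).deriv]
  calc _ = 2 * x * (rexp (x ^ 2) * rexp (-(x ^ 2))) := by ring
    _ = 2 * x := by rw [← Real.exp_add, add_neg_cancel, Real.exp_zero, mul_one]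

lemma physHermite_succ_succ (n : ℕ) (x : ℝ) :
    physHermite (n + 2) x = 2 * x * physHermite (n + 1) x - 2 * (n + 1) * physHermite n x := by
  rw [physHermite, iteratedDeriv_exp_neg_sq_succ_succ, physHermite, physHermite]
  ring

noncomputable def hermiteIntegrand (x : ℝ) (k : ℕ) (t : ℝ) : ℂ :=
  (x + t * I) ^ k * cexp (-(t : ℂ) ^ 2)

noncomputable def hermiteIntegral (x : ℝ) (k : ℕ) : ℂ :=
  ∫ t, hermiteIntegrand x k t

lemma pow_le_sqrt_factorial_div_pow_mul_exp {r l : ℝ} (hr : 0 ≤ r) (hl : 0 < l) (k : ℕ) :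
    r ^ k ≤ √(k ! / l ^ k) * rexp (l * r ^ 2 / 2) := by
  have h : (r ^ 2) ^ k ≤ k ! / l ^ k * rexp (l * r ^ 2) := by
    have := Real.pow_div_factorial_le_exp _ (mul_nonneg hl.le (sq_nonneg r)) k
    rw [div_le_iff₀ (by positivity), mul_pow] at this
    rw [div_mul_eq_mul_div, le_div_iff₀ (by positivity)]
    linarith
  calc r ^ k = √((r ^ 2) ^ k) := by
        rw [← pow_mul, mul_comm, pow_mul, Real.sqrt_sq (by positivity)]
    _ ≤ √(k ! / l ^ k * rexp (l * r ^ 2)) := Real.sqrt_le_sqrt h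
    _ = √(k ! / l ^ k) * rexp (l * r ^ 2 / 2) := by
      rw [Real.sqrt_mul (by positivity), Real.exp_half]

lemma norm_hermiteIntegrand_le (x t : ℝ) {l : ℝ} (hl : 0 < l) (k : ℕ) :
    ‖hermiteIntegrand x k t‖ ≤
      √(k ! / l ^ k) * rexp (l * x ^ 2 / 2) * rexp (-((1 - l / 2) * t ^ 2)) := by
  have hnorm : ‖(x : ℂ) + t * I‖ = √(x ^ 2 + t ^ 2) := Complex.norm_add_mul_I x t
  have hexp : ‖cexp (-(t : ℂ) ^ 2)‖ = rexp (-t ^ 2) := by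
    rw [Complex.norm_exp]; norm_cast
  rw [hermiteIntegrand, norm_mul, norm_pow, hnorm, hexp]
  calc √(x ^ 2 + t ^ 2) ^ k * rexp (-t ^ 2)
      ≤ √(k ! / l ^ k) * rexp (l * √(x ^ 2 + t ^ 2) ^ 2 / 2) * rexp (-t ^ 2) := by
        gcongr
        exact pow_le_sqrt_factorial_div_pow_mul_exp (Real.sqrt_nonneg _) hl k
    _ = _ := by
        rw [Real.sq_sqrt (by positivity), mul_assoc, mul_assoc, ← Real.exp_add, ← Real.exp_add]
        ring_nf

lemma integrable_hermiteIntegrand (x : ℝ) (k : ℕ) : Integrable (hermiteIntegrand x k) := by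
  have hcont : Continuous (hermiteIntegrand x k) := by unfold hermiteIntegrand; fun_prop
  refine Integrable.mono' ?_ hcont.aestronglyMeasurable
    (.of_forall fun t => norm_hermiteIntegrand_le x t one_pos k)
  have hb : (0 : ℝ) < 1 - 1 / 2 := by norm_num
  simpa only [neg_mul] using (integrable_exp_neg_mul_sq hb).const_mul _

lemma integral_norm_hermiteIntegrand_le (x : ℝ) {l : ℝ} (hl : 0 < l) (hl2 : l < 2) (k : ℕ) :
    ∫ t, ‖hermiteIntegrand x k t‖ ≤
      √(k ! / l ^ k) * rexp (l * x ^ 2 / 2) * √(π / (1 - l / 2)) := by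
  have hb : 0 < 1 - l / 2 := by linarith
  calc ∫ t, ‖hermiteIntegrand x k t‖
      ≤ ∫ t, √(k ! / l ^ k) * rexp (l * x ^ 2 / 2) * rexp (-((1 - l / 2) * t ^ 2)) := by
        refine integral_mono (integrable_hermiteIntegrand x k).norm ?_
          fun t => norm_hermiteIntegrand_le x t hl k
        simpa only [neg_mul] using (integrable_exp_neg_mul_sq hb).const_mul _
    _ = _ := by
        simp only [integral_const_mul, ← neg_mul, integral_gaussian]

lemma norm_hermiteIntegral_le (x : ℝ) {l : ℝ} (hl : 0 < l) (hl2 : l < 2) (k : ℕ) :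
    ‖hermiteIntegral x k‖ ≤ √(k ! / l ^ k) * rexp (l * x ^ 2 / 2) * √(π / (1 - l / 2)) :=
  (norm_integral_le_integral_norm _).trans (integral_norm_hermiteIntegrand_le x hl hl2 k)

lemma hermiteIntegral_zero (x : ℝ) : hermiteIntegral x 0 = √π := by
  have := integral_gaussian 1
  simp only [neg_mul, one_mul, div_one] at this
  rw [hermiteIntegral, ← this, ← integral_complex_ofReal]
  simp [hermiteIntegrand, Complex.ofReal_exp]

lemma hasDerivAt_hermiteIntegrand (x : ℝ) (m : ℕ) (t : ℝ) :
    HasDerivAt (hermiteIntegrand x m)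
      (m * I * hermiteIntegrand x (m - 1) t + 2 * I * hermiteIntegrand x (m + 1) t
        - 2 * I * x * hermiteIntegrand x m t) t := by
  -- `-2t = 2i (x + it) - 2ix` rewrites the derivative of the Gaussian factor in shifted terms.
  have hofReal : HasDerivAt (fun s : ℝ => (s : ℂ)) 1 t := (hasDerivAt_id t).ofReal_comp
  have h := (((hofReal.mul_const I).const_add (x : ℂ)).fun_pow m).fun_mul
    ((hofReal.fun_pow 2).fun_neg.cexp)
  refine h.congr_deriv ?_
  simp only [hermiteIntegrand, pow_succ ((x : ℂ) + t * I) m]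
  push_cast
  ring_nf
  rw [I_sq]
  ring

lemma hermiteIntegral_succ (x : ℝ) (m : ℕ) :
    hermiteIntegral x (m + 1) = x * hermiteIntegral x m - m / 2 * hermiteIntegral x (m - 1) := by
  have hint (k : ℕ) (c : ℂ) : Integrable fun t => c * hermiteIntegrand x k t :=
    (integrable_hermiteIntegrand x k).const_mul c
  have h := integral_eq_zero_of_hasDerivAt_of_integrable (hasDerivAt_hermiteIntegrand x m)
    (Integrable.sub ((hint _ _).fun_add (hint _ _)) (hint _ _)) (integrable_hermiteIntegrand x m)
  rw [integral_sub ((hint _ _).fun_add (hint _ _)) (hint _ _), integral_add (hint _ _) (hint _ _),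
    integral_const_mul, integral_const_mul, integral_const_mul] at h
  change m * I * hermiteIntegral x (m - 1) + 2 * I * hermiteIntegral x (m + 1)
    - 2 * I * x * hermiteIntegral x m = 0 at h
  linear_combination (-I / 2) * h + (hermiteIntegral x (m + 1) - x * hermiteIntegral x m
    + m / 2 * hermiteIntegral x (m - 1)) * I_sq

lemma sqrt_pi_mul_physHermite (x : ℝ) (k : ℕ) :
    (√π : ℂ) * physHermite k x = 2 ^ k * hermiteIntegral x k := by
  induction k using Nat.twoStepInduction with
  | zero => simp [physHermite_zero, hermiteIntegral_zero]
  | one =>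
    have h := hermiteIntegral_succ x 0
    simp only [zero_add, CharP.cast_eq_zero, zero_div, zero_mul, sub_zero] at h
    rw [physHermite_one, h, hermiteIntegral_zero]
    push_cast
    ring
  | more n ih₀ ih₁ =>
    have h := hermiteIntegral_succ x (n + 1)
    rw [Nat.add_sub_cancel] at h
    rw [physHermite_succ_succ, h]
    push_cast
    linear_combination 2 * (x : ℂ) * ih₁ - 2 * ((n : ℂ) + 1) * ih₀

lemma hasSum_integral_of_hasSum {ι α E : Type*} [Countable ι] [MeasurableSpace α]
    {μ : Measure α} [NormedAddCommGroup E] [NormedSpace ℝ E] [CompleteSpace E]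
    {F : ι → α → E} {G : α → E} (hF_int : ∀ i, Integrable (F i) μ)
    (hF_sum : Summable fun i => ∫ a, ‖F i a‖ ∂μ) (hG : ∀ a, HasSum (F · a) (G a)) :
    HasSum (fun i => ∫ a, F i a ∂μ) (∫ a, G a ∂μ) := by
  simpa only [fun a => (hG a).tsum_eq] using
    hasSum_integral_of_summable_integral_norm hF_int hF_sum

lemma pow_div_sqrt_factorial_le (a : ℝ) (k : ℕ) :
    a ^ k / √(k !) ≤ ((2 * a ^ 2) ^ k / k ! + (1 / 2) ^ k) / 2 := by
  have h2 : √2 * (1 / √2) = 1 := by field_simp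
  have huv : (√2 * a) ^ k / √(k !) * (1 / √2) ^ k = a ^ k / √(k !) := by
    rw [div_mul_eq_mul_div, ← mul_pow, mul_right_comm, h2, one_mul]
  have hu : ((√2 * a) ^ k / √(k !)) ^ 2 = (2 * a ^ 2) ^ k / k ! := by
    rw [div_pow, ← pow_mul, mul_comm k 2, pow_mul, mul_pow, Real.sq_sqrt zero_le_two,
      Real.sq_sqrt (by positivity)]
  have hv : ((1 / √2) ^ k) ^ 2 = (1 / 2) ^ k := by
    rw [← pow_mul, mul_comm k 2, pow_mul, div_pow, one_pow, Real.sq_sqrt zero_le_two]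
  linarith [two_mul_le_add_sq ((√2 * a) ^ k / √(k !)) ((1 / √2) ^ k)]

lemma hasSum_pow_div_factorial_mul_hermiteIntegrand (x t : ℝ) (w : ℂ) :
    HasSum (fun k => w ^ k / k ! * hermiteIntegrand x k t)
      (cexp (w * (x + t * I)) * cexp (-(t : ℂ) ^ 2)) := by
  have h := (NormedSpace.expSeries_div_hasSum_exp (w * (x + t * I))).mul_right
    (cexp (-(t : ℂ) ^ 2))
  rw [← Complex.exp_eq_exp_ℂ] at h
  refine (congrArg (HasSum · _) (funext fun k => ?_)).mpr h
  rw [hermiteIntegrand, mul_pow]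
  ring

lemma integral_cexp_mul_add_mul_I_mul_cexp_neg_sq (x : ℝ) (w : ℂ) :
    ∫ t : ℝ, cexp (w * (x + t * I)) * cexp (-(t : ℂ) ^ 2) = √π * cexp (w * x - w ^ 2 / 4) := by
  have h (t : ℝ) : cexp (w * (x + t * I)) * cexp (-(t : ℂ) ^ 2)
      = cexp (-1 * (t : ℂ) ^ 2 + w * I * t + w * x) := by
    rw [← Complex.exp_add]; ring_nf
  simp_rw [h]
  rw [integral_cexp_quadratic (by norm_num), neg_neg, div_one, Real.sqrt_eq_rpow,
    Complex.ofReal_cpow Real.pi_pos.le]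
  push_cast
  ring_nf
  rw [I_sq]
  ring_nf

lemma hasSum_pow_div_factorial_mul_hermiteIntegral (x : ℝ) (w : ℂ) :
    HasSum (fun k => w ^ k / k ! * hermiteIntegral x k) (√π * cexp (w * x - w ^ 2 / 4)) := by
  set C := rexp (1 * x ^ 2 / 2) * √(π / (1 - 1 / 2))
  have hbound (k : ℕ) : ∫ t, ‖w ^ k / k ! * hermiteIntegrand x k t‖ ≤
      C / 2 * ((2 * ‖w‖ ^ 2) ^ k / k ! + (1 / 2) ^ k) := by
    calc ∫ t, ‖w ^ k / k ! * hermiteIntegrand x k t‖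
        = ‖w‖ ^ k / k ! * ∫ t, ‖hermiteIntegrand x k t‖ := by
          simp only [norm_mul, norm_div, norm_pow, Complex.norm_natCast, integral_const_mul]
      _ ≤ ‖w‖ ^ k / k ! * (√(k ! / 1 ^ k) * C) := by
          refine mul_le_mul_of_nonneg_left ?_ (by positivity)
          simpa only [mul_assoc] using integral_norm_hermiteIntegrand_le x one_pos one_lt_two k
      _ = ‖w‖ ^ k / √(k !) * C := by
          rw [one_pow, div_one]
          field_simp
          rw [Real.sq_sqrt (by positivity)]
      _ ≤ ((2 * ‖w‖ ^ 2) ^ k / k ! + (1 / 2) ^ k) / 2 * C :=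
          mul_le_mul_of_nonneg_right (pow_div_sqrt_factorial_le _ k) (by positivity)
      _ = _ := by ring
  have hsum : Summable fun k : ℕ => C / 2 * ((2 * ‖w‖ ^ 2) ^ k / k ! + (1 / 2) ^ k) :=
    ((Real.summable_pow_div_factorial _).add
      (summable_geometric_of_lt_one (by norm_num) (by norm_num))).mul_left _
  have h := hasSum_integral_of_hasSum (fun k => (integrable_hermiteIntegrand x k).const_mul _)
    (hsum.of_nonneg_of_le (fun k => integral_nonneg fun t => norm_nonneg _) hbound)
    (hasSum_pow_div_factorial_mul_hermiteIntegrand x · w)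
  simp only [integral_const_mul, integral_cexp_mul_add_mul_I_mul_cexp_neg_sq] at h
  exact h

lemma integral_sqrt_pi_mul_cexp_mul_cexp_neg_sq (x : ℝ) {z : ℝ} (hz : |z| < 1) :
    ∫ s : ℝ, √π * cexp (2 * z * (x + s * I) * x - (2 * z * (x + s * I)) ^ 2 / 4)
        * cexp (-(s : ℂ) ^ 2) =
      ((π / √(1 - z ^ 2) * rexp (2 * x ^ 2 * z / (1 + z)) : ℝ) : ℂ) := by
  obtain ⟨hz₁, hz₂⟩ := abs_lt.mp hz
  have hz2 : 0 < 1 - z ^ 2 := by nlinarith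
  have h (s : ℝ) : √π * cexp (2 * z * (x + s * I) * x - (2 * z * (x + s * I)) ^ 2 / 4)
      * cexp (-(s : ℂ) ^ 2) = √π * cexp ((z ^ 2 - 1 : ℝ) * (s : ℂ) ^ 2
        + 2 * z * x * (1 - z) * I * s + (2 * z - z ^ 2) * x ^ 2) := by
    rw [mul_assoc, ← Complex.exp_add]
    congr 2
    push_cast
    linear_combination (-(z : ℂ) ^ 2 * (s : ℂ) ^ 2) * I_sq
  have hre : ((z ^ 2 - 1 : ℝ) : ℂ).re < 0 := by rw [Complex.ofReal_re]; linarith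
  simp_rw [h]
  have hcpow :
      ((π : ℂ) / -((z ^ 2 - 1 : ℝ) : ℂ)) ^ (1 / 2 : ℂ) = ((√(π / (1 - z ^ 2)) : ℝ) : ℂ) := by
    rw [show (π : ℂ) / -((z ^ 2 - 1 : ℝ) : ℂ) = ((π / (1 - z ^ 2) : ℝ) : ℂ) by push_cast; ring,
      Real.sqrt_eq_rpow, Complex.ofReal_cpow (by positivity)]
    norm_num
  have hexp :
      (2 * z - z ^ 2) * x ^ 2 - (2 * z * x * (1 - z) * I) ^ 2 / (4 * ((z ^ 2 - 1 : ℝ) : ℂ))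
        = ((2 * x ^ 2 * z / (1 + z) : ℝ) : ℂ) := by
    have h₁ : (1 + z : ℂ) ≠ 0 := by exact_mod_cast (by linarith : 1 + z ≠ 0)
    have h₂ : (z : ℂ) - 1 ≠ 0 := by exact_mod_cast (by linarith : z - 1 ≠ 0)
    push_cast
    rw [mul_pow, I_sq, show (z : ℂ) ^ 2 - 1 = (z - 1) * (1 + z) by ring]
    field_simp
    ring
  rw [integral_const_mul, integral_cexp_quadratic hre, hcpow, hexp, ← Complex.ofReal_exp]
  norm_cast
  rw [Real.sqrt_div Real.pi_pos.le, ← mul_assoc, mul_div_assoc',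
    Real.mul_self_sqrt Real.pi_pos.le]

lemma hasSum_two_mul_pow_div_factorial_mul_hermiteIntegral_sq (x : ℝ) {z : ℝ} (hz : |z| < 1) :
    HasSum (fun k => (2 * z : ℂ) ^ k / k ! * hermiteIntegral x k ^ 2)
      ((π / √(1 - z ^ 2) * rexp (2 * x ^ 2 * z / (1 + z)) : ℝ) : ℂ) := by
  set l := 1 + |z|
  have hl : 0 < l := by positivity
  have hl2 : l < 2 := by linarith
  set C := rexp (l * x ^ 2 / 2) * √(π / (1 - l / 2))
  have hI (k : ℕ) : ‖hermiteIntegral x k‖ ≤ √(k ! / l ^ k) * C := by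
    simpa only [mul_assoc] using norm_hermiteIntegral_le x hl hl2 k
  have hJ (k : ℕ) : ∫ s, ‖hermiteIntegrand x k s‖ ≤ √(k ! / l ^ k) * C := by
    simpa only [mul_assoc] using integral_norm_hermiteIntegrand_le x hl hl2 k
  have hbound (k : ℕ) :
      ∫ s, ‖(2 * z : ℂ) ^ k / k ! * hermiteIntegral x k * hermiteIntegrand x k s‖
        ≤ C ^ 2 * (2 * |z| / l) ^ k := by
    calc ∫ s, ‖(2 * z : ℂ) ^ k / k ! * hermiteIntegral x k * hermiteIntegrand x k s‖
        = (2 * |z|) ^ k / k ! * ‖hermiteIntegral x k‖ * ∫ s, ‖hermiteIntegrand x k s‖ := by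
          simp only [norm_mul, norm_div, norm_pow, Complex.norm_natCast, integral_const_mul]
          norm_num
      _ ≤ (2 * |z|) ^ k / k ! * (√(k ! / l ^ k) * C) * (√(k ! / l ^ k) * C) := by
          gcongr
          · exact hI k
          · exact hJ k
      _ = (2 * |z|) ^ k / k ! * (√(k ! / l ^ k) * √(k ! / l ^ k)) * C ^ 2 := by ring
      _ = C ^ 2 * (2 * |z| / l) ^ k := by
          rw [Real.mul_self_sqrt (by positivity), div_pow]
          field_simp
  have hsum : Summable fun k : ℕ => C ^ 2 * (2 * |z| / l) ^ k :=
    (summable_geometric_of_lt_one (by positivity)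
      ((div_lt_one hl).mpr (by linarith))).mul_left _
  have hpoint (s : ℝ) : HasSum (fun k => (2 * z : ℂ) ^ k / k ! * hermiteIntegral x k
        * hermiteIntegrand x k s)
      (√π * cexp (2 * z * (x + s * I) * x - (2 * z * (x + s * I)) ^ 2 / 4)
        * cexp (-(s : ℂ) ^ 2)) := by
    refine (congrArg (HasSum · _) (funext fun k => ?_)).mpr
      ((hasSum_pow_div_factorial_mul_hermiteIntegral x (2 * z * (x + s * I))).mul_right
        (cexp (-(s : ℂ) ^ 2)))
    rw [hermiteIntegrand, mul_pow (2 * (z : ℂ))]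
    ring
  have h := hasSum_integral_of_hasSum (fun k => (integrable_hermiteIntegrand x k).const_mul _)
    (hsum.of_nonneg_of_le (fun k => integral_nonneg fun s => norm_nonneg _) hbound) hpoint
  simp only [integral_const_mul, integral_sqrt_pi_mul_cexp_mul_cexp_neg_sq x hz] at h
  refine (congrArg (HasSum · _) (funext fun k => ?_)).mp h
  rw [sq, mul_assoc]
  rfl

lemma hasSum_pow_div_factorial_mul_physHermite_sq (x : ℝ) {z : ℝ} (hz : |z| < 1) :
    HasSum (fun k => (z / 2) ^ k / k ! * physHermite k x ^ 2)
      (rexp (2 * x ^ 2 * z / (1 + z)) / √(1 - z ^ 2)) := by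
  have hπ : ((√π : ℝ) : ℂ) ^ 2 = π := by norm_cast; exact Real.sq_sqrt Real.pi_pos.le
  have hπ₀ : (π : ℂ) ≠ 0 := by exact_mod_cast Real.pi_pos.ne'
  refine Complex.hasSum_ofReal.mp ?_
  refine (congrArg₂ HasSum (funext fun k => ?_) ?_).mp
    ((hasSum_two_mul_pow_div_factorial_mul_hermiteIntegral_sq x hz).div_const π)
  · rw [← mul_div_cancel_left₀ (hermiteIntegral x k) (pow_ne_zero k two_ne_zero),
      ← sqrt_pi_mul_physHermite]
    push_cast [div_pow]
    field_simp
    rw [hπ]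
    ring
  · push_cast
    field_simp

/-- Mehler's formula on the diagonal. -/
theorem mehler_diagonal (z x : ℝ) (hz0 : 0 ≤ z) (hz1 : z < 1) :
    HasSum
      (fun k : ℕ =>
        z ^ k * (1 / (Real.sqrt Real.pi * (Nat.factorial k : ℝ) * 2 ^ k)) *
          (physHermite k x) ^ 2 * Real.exp (-(x ^ 2)))
      (1 / Real.sqrt (Real.pi * (1 - z ^ 2)) * Real.exp (-(x ^ 2) * (1 - z) / (1 + z))) := by
  have hz : |z| < 1 := abs_lt.mpr ⟨by linarith, hz1⟩
  have hexp : rexp (-(x ^ 2)) * rexp (2 * x ^ 2 * z / (1 + z))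
      = rexp (-(x ^ 2) * (1 - z) / (1 + z)) := by
    rw [← Real.exp_add]
    congr 1
    field_simp
    ring
  refine (congrArg₂ HasSum (funext fun k => ?_) ?_).mp
    ((hasSum_pow_div_factorial_mul_physHermite_sq x hz).mul_left (rexp (-(x ^ 2)) / √π))
  · rw [div_pow]
    field_simp
  · rw [Real.sqrt_mul Real.pi_pos.le, ← hexp]
    field_simp
end

section
/- Fix 0 < α < 1 and 0 < ξ < 1, and define p(x) = (α/((1-ξ)^α √π)) ∫_ξ^1 (1-z)^{α-1/2} (1+z)^{-1/2} exp(-x² (1-z)/(1+z)) dz. Then there exist constants c, C > 0 (depending on α and ξ) such that c |x|^{-(1+2α)} ≤ p(x) ≤ C |x|^{-(1+2α)} for all |x| > 1. -/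
open MeasureTheory Real

private lemma aux_subst (r b d : ℝ) (hb : 0 < b) (hd : 0 ≤ d) :
    (∫ s in (0:ℝ)..d, s ^ r * Real.exp (-(b * s))) =
      b ^ (-(r + 1)) * ∫ t in (0:ℝ)..(b * d), t ^ r * Real.exp (-t) := by
  have hbne : b ≠ 0 := hb.ne'
  have h1 : (∫ s in (0:ℝ)..d, (b * s) ^ r * Real.exp (-(b * s)))
      = b⁻¹ * ∫ t in (0:ℝ)..(b * d), t ^ r * Real.exp (-t) := by
    have := intervalIntegral.integral_comp_mul_left (a := (0:ℝ)) (b := d)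
      (fun t => t ^ r * Real.exp (-t)) hbne
    simpa [smul_eq_mul] using this
  have h2 : (∫ s in (0:ℝ)..d, s ^ r * Real.exp (-(b * s)))
      = b ^ (-r) * ∫ s in (0:ℝ)..d, (b * s) ^ r * Real.exp (-(b * s)) := by
    rw [← intervalIntegral.integral_const_mul]
    apply intervalIntegral.integral_congr
    intro s hs
    rw [Set.uIcc_of_le hd] at hs
    have hbr : b ^ r ≠ 0 := (Real.rpow_pos_of_pos hb r).ne'
    show s ^ r * Real.exp (-(b * s)) = b ^ (-r) * ((b * s) ^ r * Real.exp (-(b * s)))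
    rw [Real.mul_rpow hb.le hs.1, Real.rpow_neg hb.le]
    field_simp
  rw [h2, h1, ← mul_assoc]
  congr 1
  rw [← Real.rpow_neg_one b, ← Real.rpow_add hb]
  congr 1
  ring

theorem density_tail_bounds (α ξ : ℝ) (hα0 : 0 < α) (hα1 : α < 1) (hξ0 : 0 < ξ) (hξ1 : ξ < 1)
    (p : ℝ → ℝ)
    (hp : ∀ x : ℝ, p x = (α / ((1 - ξ) ^ α * Real.sqrt Real.pi)) *
        ∫ z in Set.Ioo ξ (1 : ℝ),
          (1 - z) ^ (α - 1 / 2) * (1 + z) ^ (-(1 / 2 : ℝ)) * Real.exp (-(x ^ 2) * (1 - z) / (1 + z))) :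
    ∃ c C : ℝ, 0 < c ∧ 0 < C ∧ ∀ x : ℝ, 1 < |x| →
      c * |x| ^ (-(1 + 2 * α)) ≤ p x ∧ p x ≤ C * |x| ^ (-(1 + 2 * α)) := by
  have hd0 : (0:ℝ) < 1 - ξ := by linarith
  have hd1 : (1:ℝ) - ξ < 1 := by linarith
  have hr : (-1:ℝ) < α - 1/2 := by linarith
  have hr1 : (0:ℝ) < α + 1/2 := by linarith
  set A : ℝ := α / ((1 - ξ) ^ α * Real.sqrt Real.pi) with hA
  have hApos : 0 < A := by
    apply div_pos hα0
    exact mul_pos (Real.rpow_pos_of_pos hd0 α) (Real.sqrt_pos.mpr Real.pi_pos)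
  -- Gamma-type integrand on Ioi 0
  have hGint : IntegrableOn (fun t : ℝ => t ^ (α - 1/2) * Real.exp (-t)) (Set.Ioi 0) := by
    have h := Real.GammaIntegral_convergent hr1
    refine h.congr_fun (fun t ht => ?_) measurableSet_Ioi
    rw [mul_comm]
    congr 2
    ring
  set G : ℝ := ∫ t in Set.Ioi (0:ℝ), t ^ (α - 1/2) * Real.exp (-t) with hGdef
  have hintT : ∀ T : ℝ, IntervalIntegrable (fun t => t ^ (α - 1/2) * Real.exp (-t)) volume 0 T :=
    fun T => (intervalIntegral.intervalIntegrable_rpow' hr).mul_continuousOn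
      ((Real.continuous_exp.comp continuous_neg).continuousOn)
  have hnonneg : (0:ℝ→ℝ) ≤ᵐ[volume.restrict (Set.Ioi (0:ℝ))] fun t => t ^ (α - 1/2) * Real.exp (-t) := by
    filter_upwards [self_mem_ae_restrict (measurableSet_Ioi : MeasurableSet (Set.Ioi (0:ℝ)))] with t ht
    have : (0:ℝ) < t := ht
    positivity
  have hJle : ∀ T : ℝ, 0 ≤ T →
      (∫ t in (0:ℝ)..T, t ^ (α - 1/2) * Real.exp (-t)) ≤ G := by
    intro T hT
    rw [intervalIntegral.integral_of_le hT]
    exact setIntegral_mono_set hGint hnonneg (HasSubset.Subset.eventuallyLE Set.Ioc_subset_Ioi_self)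
  set K : ℝ := Real.exp (-(1 - ξ)) * ((1 - ξ) ^ (α + 1/2) / (α + 1/2)) with hKdef
  have hKpos : 0 < K := by positivity
  have hJd : K ≤ ∫ t in (0:ℝ)..(1 - ξ), t ^ (α - 1/2) * Real.exp (-t) := by
    have h1 : (∫ t in (0:ℝ)..(1 - ξ), Real.exp (-(1 - ξ)) * t ^ (α - 1/2))
        ≤ ∫ t in (0:ℝ)..(1 - ξ), t ^ (α - 1/2) * Real.exp (-t) := by
      apply intervalIntegral.integral_mono_on hd0.le
        ((intervalIntegral.intervalIntegrable_rpow' hr).const_mul _) (hintT _)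
      intro t ht
      rw [mul_comm]
      apply mul_le_mul_of_nonneg_left _ (Real.rpow_nonneg ht.1 _)
      exact Real.exp_le_exp.mpr (by linarith [ht.2])
    refine le_trans ?_ h1
    rw [intervalIntegral.integral_const_mul, integral_rpow (Or.inl hr)]
    rw [Real.zero_rpow (by linarith : α - 1/2 + 1 ≠ 0)]
    rw [show α - 1/2 + 1 = α + 1/2 by ring]
    rw [sub_zero]
  have hGpos : 0 < G := lt_of_lt_of_le hKpos (le_trans hJd (hJle _ hd0.le))
  refine ⟨A * (K / 2), A * (2 ^ (α + 1/2) * G), by positivity, by positivity, ?_⟩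
  intro x hx
  have hx2 : (1:ℝ) < x ^ 2 := by
    have h := sq_abs x
    nlinarith [abs_nonneg x]
  have hx2pos : (0:ℝ) < x ^ 2 := by linarith
  -- rewrite the integral via z = 1 - s
  have hIeq : (∫ z in Set.Ioo ξ (1:ℝ),
        (1 - z) ^ (α - 1 / 2) * (1 + z) ^ (-(1 / 2 : ℝ)) * Real.exp (-(x ^ 2) * (1 - z) / (1 + z)))
      = ∫ s in (0:ℝ)..(1 - ξ),
        s ^ (α - 1/2) * ((2 - s) ^ (-(1/2 : ℝ)) * Real.exp (-(x ^ 2) * s / (2 - s))) := by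
    rw [← MeasureTheory.integral_Ioc_eq_integral_Ioo, ← intervalIntegral.integral_of_le hξ1.le]
    have h := intervalIntegral.integral_comp_sub_left (a := (0:ℝ)) (b := 1 - ξ)
      (fun z => (1 - z) ^ (α - 1 / 2) * (1 + z) ^ (-(1 / 2 : ℝ)) *
        Real.exp (-(x ^ 2) * (1 - z) / (1 + z))) 1
    simp only [sub_sub_cancel, sub_zero] at h
    rw [← h]
    apply intervalIntegral.integral_congr
    intro s _
    have e1 : (1:ℝ) - (1 - s) = s := by ring
    have e2 : (1:ℝ) + (1 - s) = 2 - s := by ring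
    simp only [e1, e2]
    ring
  -- continuity helper
  have h2ne : ∀ s ∈ Set.Icc (0:ℝ) (1 - ξ), (2:ℝ) - s ≠ 0 := by
    intro s hs
    have := hs.2
    intro hcon
    linarith
  have hcontF : ContinuousOn (fun s : ℝ => (2 - s) ^ (-(1/2 : ℝ)) *
      Real.exp (-(x ^ 2) * s / (2 - s))) (Set.uIcc (0:ℝ) (1 - ξ)) := by
    rw [Set.uIcc_of_le hd0.le]
    apply ContinuousOn.mul
    · apply ContinuousOn.rpow_const (by fun_prop)
      intro s hs
      exact Or.inl (h2ne s hs)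
    · apply (Real.continuous_exp.comp_continuousOn)
      exact ContinuousOn.div (by fun_prop) (by fun_prop) h2ne
  have hFint : IntervalIntegrable (fun s => s ^ (α - 1/2) *
      ((2 - s) ^ (-(1/2 : ℝ)) * Real.exp (-(x ^ 2) * s / (2 - s)))) volume 0 (1 - ξ) :=
    (intervalIntegral.intervalIntegrable_rpow' hr).mul_continuousOn hcontF
  have hupint : IntervalIntegrable (fun s => s ^ (α - 1/2) * Real.exp (-(x ^ 2 / 2 * s)))
      volume 0 (1 - ξ) :=
    (intervalIntegral.intervalIntegrable_rpow' hr).mul_continuousOn (Continuous.continuousOn (by fun_prop))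
  have hlowint : IntervalIntegrable (fun s => (1/2:ℝ) * (s ^ (α - 1/2) * Real.exp (-(x ^ 2 * s))))
      volume 0 (1 - ξ) :=
    ((intervalIntegral.intervalIntegrable_rpow' hr).mul_continuousOn (Continuous.continuousOn (by fun_prop))).const_mul _
  -- pointwise upper bound
  have hup : (∫ s in (0:ℝ)..(1 - ξ), s ^ (α - 1/2) *
        ((2 - s) ^ (-(1/2 : ℝ)) * Real.exp (-(x ^ 2) * s / (2 - s))))
      ≤ ∫ s in (0:ℝ)..(1 - ξ), s ^ (α - 1/2) * Real.exp (-(x ^ 2 / 2 * s)) := by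
    apply intervalIntegral.integral_mono_on hd0.le hFint hupint
    intro s hs
    obtain ⟨hs0, hs1⟩ := hs
    have h2s : (1:ℝ) ≤ 2 - s := by linarith
    have hmono : Real.exp (-(x ^ 2) * s / (2 - s)) ≤ Real.exp (-(x ^ 2 / 2 * s)) := by
      apply Real.exp_le_exp.mpr
      have hdiv : x ^ 2 / 2 * s ≤ x ^ 2 * s / (2 - s) := by
        rw [div_mul_eq_mul_div]
        apply div_le_div_of_nonneg_left (by positivity) (by linarith) (by linarith)
      have e : -(x ^ 2) * s / (2 - s) = -(x ^ 2 * s / (2 - s)) := by ring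
      rw [e]
      linarith
    calc s ^ (α - 1/2) * ((2 - s) ^ (-(1/2 : ℝ)) * Real.exp (-(x ^ 2) * s / (2 - s)))
        ≤ s ^ (α - 1/2) * (1 * Real.exp (-(x ^ 2 / 2 * s))) := by
          apply mul_le_mul_of_nonneg_left _ (Real.rpow_nonneg hs0 _)
          exact mul_le_mul (Real.rpow_le_one_of_one_le_of_nonpos h2s (by norm_num)) hmono
            (Real.exp_pos _).le zero_le_one
      _ = s ^ (α - 1/2) * Real.exp (-(x ^ 2 / 2 * s)) := by rw [one_mul]
  -- pointwise lower bound
  have hlow : (∫ s in (0:ℝ)..(1 - ξ), (1/2:ℝ) * (s ^ (α - 1/2) * Real.exp (-(x ^ 2 * s))))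
      ≤ ∫ s in (0:ℝ)..(1 - ξ), s ^ (α - 1/2) *
        ((2 - s) ^ (-(1/2 : ℝ)) * Real.exp (-(x ^ 2) * s / (2 - s))) := by
    apply intervalIntegral.integral_mono_on hd0.le hlowint hFint
    intro s hs
    obtain ⟨hs0, hs1⟩ := hs
    have h2s : (1:ℝ) ≤ 2 - s := by linarith
    have hhalf : (1/2:ℝ) ≤ (2 - s) ^ (-(1/2 : ℝ)) := by
      have h1 : (2:ℝ) ^ (-(1/2 : ℝ)) ≤ (2 - s) ^ (-(1/2 : ℝ)) :=
        Real.rpow_le_rpow_of_nonpos (by linarith) (by linarith) (by norm_num)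
      have h2 : (2:ℝ) ^ (-1 : ℝ) ≤ (2:ℝ) ^ (-(1/2 : ℝ)) :=
        Real.rpow_le_rpow_of_exponent_le one_le_two (by norm_num)
      have h3 : (2:ℝ) ^ (-1 : ℝ) = 1/2 := by
        rw [Real.rpow_neg_one]; norm_num
      linarith
    have hmono : Real.exp (-(x ^ 2 * s)) ≤ Real.exp (-(x ^ 2) * s / (2 - s)) := by
      apply Real.exp_le_exp.mpr
      have hdiv : x ^ 2 * s / (2 - s) ≤ x ^ 2 * s := div_le_self (by positivity) h2s
      have e : -(x ^ 2) * s / (2 - s) = -(x ^ 2 * s / (2 - s)) := by ring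
      rw [e]
      linarith
    calc (1/2:ℝ) * (s ^ (α - 1/2) * Real.exp (-(x ^ 2 * s)))
        = s ^ (α - 1/2) * ((1/2:ℝ) * Real.exp (-(x ^ 2 * s))) := by ring
      _ ≤ s ^ (α - 1/2) * ((2 - s) ^ (-(1/2 : ℝ)) * Real.exp (-(x ^ 2) * s / (2 - s))) := by
          apply mul_le_mul_of_nonneg_left _ (Real.rpow_nonneg hs0 _)
          exact mul_le_mul hhalf hmono (Real.exp_pos _).le (Real.rpow_nonneg (by linarith) _)
  -- substitution identities
  have hsub1 : (∫ s in (0:ℝ)..(1 - ξ), s ^ (α - 1/2) * Real.exp (-(x ^ 2 / 2 * s)))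
      = (x ^ 2 / 2) ^ (-(α - 1/2 + 1)) *
        ∫ t in (0:ℝ)..(x ^ 2 / 2 * (1 - ξ)), t ^ (α - 1/2) * Real.exp (-t) :=
    aux_subst (α - 1/2) (x ^ 2 / 2) (1 - ξ) (by positivity) hd0.le
  have hsub2 : (∫ s in (0:ℝ)..(1 - ξ), s ^ (α - 1/2) * Real.exp (-(x ^ 2 * s)))
      = (x ^ 2) ^ (-(α - 1/2 + 1)) *
        ∫ t in (0:ℝ)..(x ^ 2 * (1 - ξ)), t ^ (α - 1/2) * Real.exp (-t) :=
    aux_subst (α - 1/2) (x ^ 2) (1 - ξ) hx2pos hd0.le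
  -- J monotone
  have hJmono : (∫ t in (0:ℝ)..(1 - ξ), t ^ (α - 1/2) * Real.exp (-t))
      ≤ ∫ t in (0:ℝ)..(x ^ 2 * (1 - ξ)), t ^ (α - 1/2) * Real.exp (-t) := by
    have hdle : (1:ℝ) - ξ ≤ x ^ 2 * (1 - ξ) := by nlinarith
    rw [intervalIntegral.integral_of_le hd0.le,
      intervalIntegral.integral_of_le (by linarith : (0:ℝ) ≤ x ^ 2 * (1 - ξ))]
    apply setIntegral_mono_set (hGint.mono_set Set.Ioc_subset_Ioi_self)
    · filter_upwards [self_mem_ae_restrict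
        (measurableSet_Ioc : MeasurableSet (Set.Ioc (0:ℝ) (x ^ 2 * (1 - ξ))))] with t ht
      have : (0:ℝ) < t := ht.1
      positivity
    · exact HasSubset.Subset.eventuallyLE (Set.Ioc_subset_Ioc_right hdle)
  -- power identities
  have habs : (x ^ 2 : ℝ) ^ (-(α - 1/2 + 1)) = |x| ^ (-(1 + 2 * α)) := by
    rw [show (x ^ 2 : ℝ) = |x| ^ (2:ℕ) from (sq_abs x).symm, ← Real.rpow_natCast |x| 2,
      ← Real.rpow_mul (abs_nonneg x)]
    congr 1
    push_cast
    ring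
  have hpow1 : (x ^ 2 / 2 : ℝ) ^ (-(α - 1/2 + 1)) = 2 ^ (α + 1/2) * |x| ^ (-(1 + 2 * α)) := by
    rw [Real.div_rpow (sq_nonneg x) (by norm_num : (0:ℝ) ≤ 2), habs,
      show (-(α - 1/2 + 1)) = -(α + 1/2) by ring,
      Real.rpow_neg (by norm_num : (0:ℝ) ≤ 2), div_eq_mul_inv, inv_inv]
    ring
  constructor
  · -- lower bound
    rw [hp x, hIeq]
    have chain1 : (1/2:ℝ) * ((x ^ 2) ^ (-(α - 1/2 + 1)) * K)
        ≤ ∫ s in (0:ℝ)..(1 - ξ), s ^ (α - 1/2) *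
          ((2 - s) ^ (-(1/2 : ℝ)) * Real.exp (-(x ^ 2) * s / (2 - s))) := by
      refine le_trans ?_ hlow
      rw [intervalIntegral.integral_const_mul, hsub2]
      apply mul_le_mul_of_nonneg_left _ (by norm_num : (0:ℝ) ≤ 1/2)
      exact mul_le_mul_of_nonneg_left (le_trans hJd hJmono) (Real.rpow_nonneg (sq_nonneg x) _)
    calc A * (K / 2) * |x| ^ (-(1 + 2 * α))
        = A * ((1/2:ℝ) * ((x ^ 2) ^ (-(α - 1/2 + 1)) * K)) := by rw [habs]; ring
      _ ≤ A * ∫ s in (0:ℝ)..(1 - ξ), s ^ (α - 1/2) *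
          ((2 - s) ^ (-(1/2 : ℝ)) * Real.exp (-(x ^ 2) * s / (2 - s))) :=
          mul_le_mul_of_nonneg_left chain1 hApos.le
  · -- upper bound
    rw [hp x, hIeq]
    have chain2 : (∫ s in (0:ℝ)..(1 - ξ), s ^ (α - 1/2) *
          ((2 - s) ^ (-(1/2 : ℝ)) * Real.exp (-(x ^ 2) * s / (2 - s))))
        ≤ (x ^ 2 / 2) ^ (-(α - 1/2 + 1)) * G := by
      refine le_trans hup ?_
      rw [hsub1]
      exact mul_le_mul_of_nonneg_left (hJle _ (by positivity)) (Real.rpow_nonneg (by positivity) _)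
    calc A * (∫ s in (0:ℝ)..(1 - ξ), s ^ (α - 1/2) *
          ((2 - s) ^ (-(1/2 : ℝ)) * Real.exp (-(x ^ 2) * s / (2 - s))))
        ≤ A * ((x ^ 2 / 2) ^ (-(α - 1/2 + 1)) * G) :=
          mul_le_mul_of_nonneg_left chain2 hApos.le
      _ = A * (2 ^ (α + 1/2) * G) * |x| ^ (-(1 + 2 * α)) := by rw [hpow1]; ring
end

section
/- Fix 0 < α < 1 and 0 < ξ < 1 and define ρ_k = (α/(1-ξ)^α) ∫_ξ^1 z^k (1-z)^α dz for integers k ≥ 0. Then ρ_k = (α Γ(α+1)/(1-ξ)^α) · k^{-(1+α)} · (1 + o(1)) as k → ∞. -/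
open MeasureTheory Real Filter

lemma beta_eval (α : ℝ) (hα0 : 0 < α) (k : ℕ) :
    ∫ z in (0:ℝ)..1, z ^ k * (1 - z) ^ α
      = (k.factorial : ℝ) / ∏ j ∈ Finset.range (k + 1), (α + 1 + j) := by
  have hre : 0 < Complex.re ((α : ℂ) + 1) := by simp; linarith
  have h := Complex.betaIntegral_eval_nat_add_one_right hre k
  have hbeta : Complex.betaIntegral ((α : ℂ) + 1) ((k : ℂ) + 1)
      = ((∫ x in (0:ℝ)..1, x ^ α * (1 - x) ^ k : ℝ) : ℂ) := by
    rw [Complex.betaIntegral, ← intervalIntegral.integral_ofReal]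
    apply intervalIntegral.integral_congr
    intro x hx
    rw [Set.uIcc_of_le (by norm_num : (0:ℝ) ≤ 1)] at hx
    have hx0 : 0 ≤ x := hx.1
    have hx1 : x ≤ 1 := hx.2
    push_cast
    rw [add_sub_cancel_right, add_sub_cancel_right, Complex.cpow_natCast,
      ← Complex.ofReal_cpow hx0]
  have hsub : (∫ x in (0:ℝ)..1, x ^ α * (1 - x) ^ k)
      = ∫ z in (0:ℝ)..1, z ^ k * (1 - z) ^ α := by
    have := intervalIntegral.integral_comp_sub_left (a := (0:ℝ)) (b := 1)
      (fun z => z ^ k * (1 - z) ^ α) 1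
    simp only [sub_sub_cancel, sub_self, sub_zero] at this
    rw [← this]
    apply intervalIntegral.integral_congr
    intro x _
    ring
  rw [hbeta, hsub] at h
  have : ((∫ z in (0:ℝ)..1, z ^ k * (1 - z) ^ α : ℝ) : ℂ)
      = (((k.factorial : ℝ) / ∏ j ∈ Finset.range (k + 1), (α + 1 + j) : ℝ) : ℂ) := by
    rw [h]
    push_cast
    ring_nf
  exact_mod_cast this

theorem rho_diagonal_asymptotics (α ξ : ℝ) (hα0 : 0 < α) (hα1 : α < 1) (hξ0 : 0 < ξ) (hξ1 : ξ < 1)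
    (ρ : ℕ → ℝ)
    (hρ : ∀ k : ℕ, ρ k = (α / (1 - ξ) ^ α) * ∫ z in Set.Ioo ξ (1 : ℝ), z ^ k * (1 - z) ^ α) :
    Tendsto (fun k : ℕ => (k : ℝ) ^ (1 + α) * ρ k) atTop
      (nhds (α * Real.Gamma (α + 1) / (1 - ξ) ^ α)) := by
  have hcont : ∀ k : ℕ, Continuous fun z : ℝ => z ^ k * (1 - z) ^ α := fun k =>
    (continuous_pow k).mul
      ((continuous_const.sub continuous_id).rpow_const (fun x => Or.inr hα0.le))
  -- split the integral
  have hsplit : ∀ k : ℕ, (∫ z in Set.Ioo ξ (1:ℝ), z ^ k * (1 - z) ^ α)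
      = (∫ z in (0:ℝ)..1, z ^ k * (1 - z) ^ α) - ∫ z in (0:ℝ)..ξ, z ^ k * (1 - z) ^ α := by
    intro k
    have hIoo : (∫ z in Set.Ioo ξ (1:ℝ), z ^ k * (1 - z) ^ α)
        = ∫ z in ξ..1, z ^ k * (1 - z) ^ α := by
      rw [intervalIntegral.integral_of_le hξ1.le, integral_Ioc_eq_integral_Ioo]
    have hadd : (∫ z in (0:ℝ)..ξ, z ^ k * (1 - z) ^ α) + ∫ z in ξ..1, z ^ k * (1 - z) ^ α
        = ∫ z in (0:ℝ)..1, z ^ k * (1 - z) ^ α :=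
      intervalIntegral.integral_add_adjacent_intervals
        ((hcont k).intervalIntegrable _ _) ((hcont k).intervalIntegrable _ _)
    rw [hIoo]; linarith
  -- main term
  have hmain : Tendsto (fun k : ℕ => (k : ℝ) ^ (1 + α) * ∫ z in (0:ℝ)..1, z ^ k * (1 - z) ^ α)
      atTop (nhds (Real.Gamma (α + 1))) := by
    have : ∀ k : ℕ, (k : ℝ) ^ (1 + α) * (∫ z in (0:ℝ)..1, z ^ k * (1 - z) ^ α)
        = Real.GammaSeq (α + 1) k := by
      intro k
      rw [beta_eval α hα0 k, Real.GammaSeq, add_comm 1 α, mul_div_assoc]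
    simp only [this]
    exact Real.GammaSeq_tendsto_Gamma (α + 1)
  -- tail term
  have htail : Tendsto (fun k : ℕ => (k : ℝ) ^ (1 + α) * ∫ z in (0:ℝ)..ξ, z ^ k * (1 - z) ^ α)
      atTop (nhds 0) := by
    apply squeeze_zero_norm' (a := fun k : ℕ => (k : ℝ) ^ 2 * ξ ^ k)
    · filter_upwards [eventually_ge_atTop 1] with k hk
      have hk1 : (1:ℝ) ≤ (k:ℝ) := by exact_mod_cast hk
      have hb : ‖∫ z in (0:ℝ)..ξ, z ^ k * (1 - z) ^ α‖ ≤ ξ ^ k * |ξ - 0| := by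
        apply intervalIntegral.norm_integral_le_of_norm_le_const
        intro x hx
        rw [Set.uIoc_of_le hξ0.le] at hx
        have hx0 : 0 < x := hx.1
        have hxξ : x ≤ ξ := hx.2
        have h1 : |x ^ k * (1 - x) ^ α| = x ^ k * (1 - x) ^ α := by
          apply abs_of_nonneg
          exact mul_nonneg (pow_nonneg hx0.le k) (Real.rpow_nonneg (by linarith) α)
        rw [Real.norm_eq_abs, h1]
        have h2 : x ^ k ≤ ξ ^ k := pow_le_pow_left₀ hx0.le hxξ k
        have h3 : (1 - x) ^ α ≤ 1 := by
          apply Real.rpow_le_one (by linarith) (by linarith) hα0.le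
        calc x ^ k * (1 - x) ^ α ≤ ξ ^ k * 1 :=
              mul_le_mul h2 h3 (Real.rpow_nonneg (by linarith) α) (pow_nonneg hξ0.le k)
          _ = ξ ^ k := mul_one _
      have hpow : (k : ℝ) ^ (1 + α) ≤ (k : ℝ) ^ 2 := by
        rw [show ((k:ℝ) ^ 2) = (k:ℝ) ^ ((2:ℕ):ℝ) by rw [Real.rpow_natCast]]
        exact Real.rpow_le_rpow_of_exponent_le hk1 (by push_cast; linarith)
      calc ‖(k : ℝ) ^ (1 + α) * ∫ z in (0:ℝ)..ξ, z ^ k * (1 - z) ^ α‖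
          = (k : ℝ) ^ (1 + α) * ‖∫ z in (0:ℝ)..ξ, z ^ k * (1 - z) ^ α‖ := by
            rw [norm_mul, Real.norm_eq_abs ((k:ℝ) ^ (1+α)),
              abs_of_nonneg (Real.rpow_nonneg (Nat.cast_nonneg k) _)]
        _ ≤ (k : ℝ) ^ 2 * (ξ ^ k * |ξ - 0|) := by
            apply mul_le_mul hpow hb (norm_nonneg _)
            positivity
        _ ≤ (k : ℝ) ^ 2 * ξ ^ k := by
            rw [sub_zero, abs_of_nonneg hξ0.le]
            have : ξ ^ k * ξ ≤ ξ ^ k * 1 := by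
              apply mul_le_mul_of_nonneg_left hξ1.le (pow_nonneg hξ0.le k)
            nlinarith [pow_nonneg hξ0.le k, sq_nonneg (k:ℝ)]
    · exact tendsto_pow_const_mul_const_pow_of_abs_lt_one 2
        (by rw [abs_of_nonneg hξ0.le]; exact hξ1)
  have hcomb := (tendsto_const_nhds (x := α / (1 - ξ) ^ α)).mul (hmain.sub htail)
  rw [sub_zero] at hcomb
  have heq : (fun k : ℕ => (k : ℝ) ^ (1 + α) * ρ k)
      = fun k : ℕ => (α / (1 - ξ) ^ α) *
          (((k : ℝ) ^ (1 + α) * ∫ z in (0:ℝ)..1, z ^ k * (1 - z) ^ α)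
            - (k : ℝ) ^ (1 + α) * ∫ z in (0:ℝ)..ξ, z ^ k * (1 - z) ^ α) := by
    funext k
    rw [hρ k, hsplit k]
    ring
  rw [heq, show α * Real.Gamma (α + 1) / (1 - ξ) ^ α
      = (α / (1 - ξ) ^ α) * Real.Gamma (α + 1) by ring]
  exact hcomb
end

section
/- Let 0 < η < 1 and set h_ad(n) = (2η log n/(1-η) - √(2η log n/(1-η)))^{-1/2}. Fix any β > 0, 0 < r < 1. Then as n → ∞: (i) exp(-2β/h_ad(n)^r) ≤ exp(-2β/h_opt(n)^r)(1+o(1)), where h_opt(n) solves 2β/h^r + 2γ/h² = log n with γ = (1-η)/(4η); and (ii) (1/n) exp((1-η)/(2η h_ad(n)²)) = exp(-√((1-η) log n/(2η))), which is o(exp(-2β/h_opt(n)^r)). -/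
/-!
Put `a = 2η/(1-η)` and `t = a log n`. The inverse squared bandwidths are `u = h_ad⁻² = t - √t`
and `v = h_opt⁻²`, where the bandwidth equation reads `v + 2aβ v^(r/2) = t`. Because `r/2 < 1/2`,
the bias term `2aβ v^(r/2) ≤ 2aβ t^(r/2)` is `o(√t)`, so `u ≤ v ≤ u + √t`, and concavity of
`x ↦ x^(r/2)` gives `0 ≤ v^(r/2) - u^(r/2) ≤ 2 t^(r/2 - 1/2) → 0`: this is (i). The variance term
`(1/n) exp(u/a)` equals `exp(-√t/a)` exactly, and it is negligible against the bias
`exp(-2β v^(r/2))` because `2β v^(r/2) - √t/a → -∞`.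
-/

open Real Filter Topology

lemma Real.rpow_sub_rpow_le_mul_rpow_sub_one {x y p : ℝ} (hx : 0 < x) (hy : 0 ≤ y)
    (hp0 : 0 ≤ p) (hp1 : p ≤ 1) : y ^ p - x ^ p ≤ p * x ^ (p - 1) * (y - x) := by
  have hs : -1 ≤ (y - x) / x := by rw [le_div_iff₀ hx]; linarith
  have hy_eq : y = x * (1 + (y - x) / x) := by field_simp; ring
  calc y ^ p - x ^ p = x ^ p * (1 + (y - x) / x) ^ p - x ^ p := by
        rw [← mul_rpow hx.le (by linarith), ← hy_eq]
    _ ≤ x ^ p * (1 + p * ((y - x) / x)) - x ^ p := by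
        gcongr; exact rpow_one_add_le_one_add_mul_self hs hp0 hp1
    _ = p * x ^ (p - 1) * (y - x) := by rw [rpow_sub_one hx.ne']; field_simp; ring

lemma Real.rpow_mul_sqrt {t : ℝ} (ht : 0 < t) (q : ℝ) : t ^ q * √t = t ^ (q + 1 / 2) := by
  rw [sqrt_eq_rpow, ← rpow_add ht]

lemma Real.sqrt_le_half_self {t : ℝ} (ht : 4 ≤ t) : √t ≤ t / 2 := by
  have h2 : 2 ≤ √t := (le_sqrt zero_le_two (by linarith)).2 (by linarith)
  nlinarith [mul_self_sqrt (show 0 ≤ t by linarith)]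

lemma rpow_sub_rpow_sub_sqrt_mem_Icc {c p t v : ℝ} (hc : 0 ≤ c) (hp0 : 0 ≤ p) (hp1 : p ≤ 1)
    (ht : 4 ≤ t) (hv : 0 ≤ v) (hvt : v + c * v ^ p = t) (hct : c * t ^ p ≤ √t) :
    v ^ p - (t - √t) ^ p ∈ Set.Icc 0 (2 * t ^ (p - 1 / 2)) := by
  have ht0 : 0 < t := by linarith
  have hsqrt := sqrt_le_half_self ht
  have hvt_le : v ≤ t := by have := mul_nonneg hc (rpow_nonneg hv p); linarith
  have hu_le : t - √t ≤ v := by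
    have := mul_le_mul_of_nonneg_left (rpow_le_rpow hv hvt_le hp0) hc; linarith
  have hu : t / 2 ≤ t - √t := by linarith
  have hu0 : 0 < t - √t := by linarith
  refine ⟨sub_nonneg.2 (rpow_le_rpow hu0.le hu_le hp0), ?_⟩
  have h_half : (t - √t) ^ (p - 1) ≤ 2 * t ^ (p - 1) := calc
    (t - √t) ^ (p - 1) ≤ (t * (1 / 2)) ^ (p - 1) :=
      rpow_le_rpow_of_nonpos (by positivity) (by linarith) (by linarith)
    _ = t ^ (p - 1) * (1 / 2) ^ (p - 1) := mul_rpow ht0.le (by norm_num)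
    _ ≤ t ^ (p - 1) * (1 / 2) ^ (-1 : ℝ) := mul_le_mul_of_nonneg_left
      (rpow_le_rpow_of_exponent_ge (by norm_num) (by norm_num) (by linarith)) (by positivity)
    _ = 2 * t ^ (p - 1) := by norm_num; ring
  calc v ^ p - (t - √t) ^ p ≤ p * (t - √t) ^ (p - 1) * (v - (t - √t)) :=
        rpow_sub_rpow_le_mul_rpow_sub_one hu0 hv hp0 hp1
    _ ≤ 1 * (2 * t ^ (p - 1)) * √t := by
        gcongr
        linarith
    _ = 2 * t ^ (p - 1 / 2) := by
        rw [one_mul, mul_assoc, rpow_mul_sqrt ht0]; ring_nf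

lemma eventually_const_mul_rpow_le_half_sqrt (c : ℝ) {p : ℝ} (hp : p < 1 / 2) :
    ∀ᶠ t in atTop, c * t ^ p ≤ √t / 2 := by
  have h_lim : Tendsto (fun t : ℝ => c * t ^ (p - 1 / 2)) atTop (𝓝 0) := by
    simpa using (tendsto_rpow_neg_atTop (show 0 < 1 / 2 - p by linarith)).const_mul c
  filter_upwards [h_lim.eventually_le_const (show (0 : ℝ) < 1 / 2 by norm_num),
    eventually_gt_atTop 0] with t h_small ht
  calc c * t ^ p = c * t ^ (p - 1 / 2) * √t := by rw [mul_assoc, rpow_mul_sqrt ht]; ring_nf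
    _ ≤ 1 / 2 * √t := by gcongr
    _ = √t / 2 := by ring

section RootOfAddMulRpow

variable {α : Type*} {l : Filter α} {c p : ℝ} {t v : α → ℝ}

lemma tendsto_rpow_sub_rpow_sub_sqrt (hc : 0 ≤ c) (hp0 : 0 ≤ p) (hp : p < 1 / 2)
    (ht : Tendsto t l atTop) (hv : ∀ᶠ x in l, 0 ≤ v x ∧ v x + c * v x ^ p = t x) :
    Tendsto (fun x => v x ^ p - (t x - √(t x)) ^ p) l (𝓝 0) := by
  have h_lim : Tendsto (fun x => 2 * t x ^ (p - 1 / 2)) l (𝓝 0) := by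
    simpa using ((tendsto_rpow_neg_atTop (show 0 < 1 / 2 - p by linarith)).comp ht).const_mul 2
  have h_mem : ∀ᶠ x in l, v x ^ p - (t x - √(t x)) ^ p ∈ Set.Icc 0 (2 * t x ^ (p - 1 / 2)) := by
    filter_upwards [hv, ht.eventually_ge_atTop 4,
      ht.eventually (eventually_const_mul_rpow_le_half_sqrt c hp)] with x ⟨hvx, hvt⟩ ht4 hct
    exact rpow_sub_rpow_sub_sqrt_mem_Icc hc hp0 (by linarith) ht4 hvx hvt
      (hct.trans (half_le_self (sqrt_nonneg _)))
  exact tendsto_of_tendsto_of_tendsto_of_le_of_le' tendsto_const_nhds h_lim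
    (h_mem.mono fun _ h => h.1) (h_mem.mono fun _ h => h.2)

lemma tendsto_const_mul_rpow_sub_sqrt_atBot (hc : 0 ≤ c) (hp0 : 0 ≤ p) (hp : p < 1 / 2)
    (ht : Tendsto t l atTop) (hv : ∀ᶠ x in l, 0 ≤ v x ∧ v x + c * v x ^ p = t x) :
    Tendsto (fun x => c * v x ^ p - √(t x)) l atBot := by
  have h_lim : Tendsto (fun x => -(√(t x) / 2)) l atBot :=
    tendsto_neg_atTop_atBot.comp ((tendsto_sqrt_atTop.comp ht).atTop_div_const two_pos)
  refine tendsto_atBot_mono' l ?_ h_lim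
  filter_upwards [hv, ht.eventually (eventually_const_mul_rpow_le_half_sqrt c hp)]
    with x ⟨hvx, hvt⟩ hct
  have hvt_le : v x ≤ t x := by have := mul_nonneg hc (rpow_nonneg hvx p); linarith
  have := mul_le_mul_of_nonneg_left (rpow_le_rpow hvx hvt_le hp0) hc
  linarith

end RootOfAddMulRpow

lemma inv_sq_rpow_neg_half {x : ℝ} (hx : 0 ≤ x) : ((x ^ (-(1 / 2 : ℝ))) ^ 2)⁻¹ = x := by
  rw [← rpow_natCast, ← rpow_mul hx]; norm_num [rpow_neg_one]

lemma div_rpow_eq_mul_inv_sq_rpow {h : ℝ} (hh : 0 ≤ h) (b r : ℝ) :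
    b / h ^ r = b * ((h ^ 2)⁻¹) ^ (r / 2) := by
  rw [inv_rpow (by positivity), ← rpow_natCast, ← rpow_mul hh, div_eq_mul_inv]; ring_nf

lemma sqrt_mul_eq_mul_sqrt_div {a : ℝ} (ha : 0 < a) (L : ℝ) : √(a * L) = a * √(L / a) := by
  rw [← sqrt_sq ha.le, ← sqrt_mul (sq_nonneg a), sqrt_sq ha.le]; field_simp

lemma inv_sq_add_mul_rpow_eq {a b γ h r L : ℝ} (hh : 0 ≤ h) (hγ : 2 * γ * a = 1)
    (hL : b / h ^ r + 2 * γ / h ^ 2 = L) :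
    (h ^ 2)⁻¹ + a * b * ((h ^ 2)⁻¹) ^ (r / 2) = a * L := by
  rw [← hL, div_rpow_eq_mul_inv_sq_rpow hh, div_eq_mul_inv]
  linear_combination -(h ^ 2)⁻¹ * hγ

lemma exp_neg_div_rpow_div_exp_neg_div_rpow {h k : ℝ} (hh : 0 ≤ h) (hk : 0 ≤ k) (b r : ℝ) :
    exp (-b / h ^ r) / exp (-b / k ^ r) =
      exp (b * (((k ^ 2)⁻¹) ^ (r / 2) - ((h ^ 2)⁻¹) ^ (r / 2))) := by
  rw [← exp_sub, div_rpow_eq_mul_inv_sq_rpow hh, div_rpow_eq_mul_inv_sq_rpow hk]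
  ring_nf

lemma one_div_mul_exp_sub_sqrt_div {a x : ℝ} (ha : 0 < a) (hx : 0 < x) :
    1 / x * exp ((a * log x - √(a * log x)) / a) = exp (-√(log x / a)) := by
  rw [sqrt_mul_eq_mul_sqrt_div ha, ← mul_sub, mul_div_cancel_left₀ _ ha.ne', exp_sub, exp_log hx,
    exp_neg]
  field_simp

theorem adaptive_bandwidth_rates (η β r : ℝ) (hη0 : 0 < η) (hη1 : η < 1)
    (hβ : 0 < β) (hr0 : 0 < r) (hr1 : r < 1) (γ : ℝ) (hγ : γ = (1 - η) / (4 * η))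
    (had hopt : ℕ → ℝ)
    (hhad : ∀ n : ℕ, had n =
        (2 * η * Real.log n / (1 - η) - Real.sqrt (2 * η * Real.log n / (1 - η))) ^ (-(1 / 2 : ℝ)))
    (hoptpos : ∀ n, 2 ≤ n → 0 < hopt n)
    (hopteq : ∀ n : ℕ, 2 ≤ n → 2 * β / hopt n ^ r + 2 * γ / hopt n ^ 2 = Real.log n) :
    (Filter.limsup
        (fun n : ℕ => Real.exp (-2 * β / had n ^ r) / Real.exp (-2 * β / hopt n ^ r)) atTop ≤ 1) ∧
      (∀ᶠ n : ℕ in atTop,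
        (1 / (n : ℝ)) * Real.exp ((1 - η) / (2 * η * had n ^ 2)) =
          Real.exp (-Real.sqrt ((1 - η) * Real.log n / (2 * η)))) ∧
      Tendsto
        (fun n : ℕ =>
          ((1 / (n : ℝ)) * Real.exp ((1 - η) / (2 * η * had n ^ 2))) /
            Real.exp (-2 * β / hopt n ^ r))
        atTop (nhds 0) := by
  have hη' : 0 < 1 - η := by linarith
  set a := 2 * η / (1 - η) with ha_def
  have ha : 0 < a := by positivity
  have ht : Tendsto (fun n : ℕ => a * log n) atTop atTop :=
    (tendsto_log_atTop.comp tendsto_natCast_atTop_atTop).const_mul_atTop ha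
  have hu : ∀ᶠ n : ℕ in atTop, 0 ≤ had n ∧ (had n ^ 2)⁻¹ = a * log n - √(a * log n) := by
    filter_upwards [ht.eventually_ge_atTop 4] with n hn
    have hx : 0 ≤ a * log n - √(a * log n) := by linarith [sqrt_le_half_self hn]
    rw [hhad, mul_div_right_comm]
    exact ⟨rpow_nonneg hx _, inv_sq_rpow_neg_half hx⟩
  have hv : ∀ᶠ n : ℕ in atTop, 0 ≤ (hopt n ^ 2)⁻¹ ∧
      (hopt n ^ 2)⁻¹ + a * (2 * β) * ((hopt n ^ 2)⁻¹) ^ (r / 2) = a * log n := by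
    filter_upwards [eventually_ge_atTop 2] with n hn
    refine ⟨by positivity, inv_sq_add_mul_rpow_eq (hoptpos n hn).le ?_ (hopteq n hn)⟩
    rw [hγ, ha_def]; field_simp; ring
  have hc : 0 ≤ a * (2 * β) := by positivity
  have hp : r / 2 < 1 / 2 := by linarith
  have h_scale : ∀ L : ℝ, (1 - η) * L / (2 * η) = L / a := fun L => by rw [ha_def]; field_simp
  have h_ii : ∀ᶠ n : ℕ in atTop, 1 / (n : ℝ) * exp ((1 - η) / (2 * η * had n ^ 2)) =
      exp (-√((1 - η) * log n / (2 * η))) := by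
    filter_upwards [hu, eventually_gt_atTop 0] with n ⟨_, hun⟩ hn
    rw [show (1 - η) / (2 * η * had n ^ 2) = (had n ^ 2)⁻¹ / a by rw [ha_def]; field_simp,
      h_scale, hun]
    exact one_div_mul_exp_sub_sqrt_div ha (by exact_mod_cast hn)
  refine ⟨?_, h_ii, ?_⟩
  · have h_gap := (tendsto_rpow_sub_rpow_sub_sqrt hc (by positivity) hp ht hv).const_mul (2 * β)
    rw [mul_zero] at h_gap
    have h_ratio := (continuous_exp.tendsto 0).comp h_gap
    rw [exp_zero] at h_ratio
    refine (h_ratio.congr' ?_).limsup_eq.le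
    filter_upwards [hu, eventually_ge_atTop 2] with n ⟨had0, hun⟩ hn
    rw [Function.comp_apply, neg_mul,
      exp_neg_div_rpow_div_exp_neg_div_rpow had0 (hoptpos n hn).le, hun]
  · have h_bot :=
      (tendsto_const_mul_rpow_sub_sqrt_atBot hc (by positivity) hp ht hv).atBot_div_const ha
    refine (tendsto_exp_atBot.comp h_bot).congr' ?_
    filter_upwards [h_ii, eventually_ge_atTop 2] with n hn_ii hn
    rw [Function.comp_apply, hn_ii, h_scale, ← exp_sub,
      div_rpow_eq_mul_inv_sq_rpow (hoptpos n hn).le, sqrt_mul_eq_mul_sqrt_div ha]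
    congr 1
    field_simp
    ring
end

section
/- Let β, L > 0, 0 < r ≤ 2, δ > 0, D > 4δ, and let J: ℝ → ℝ be measurable with 0 ≤ J ≤ 1 and J(u) = 0 for u ∉ [δ, D-δ]. For h > 0 define J_h(t) = 2√(πβrL) h^{1-r/2} e^{β/h^r} e^{-2β|t|^r} J(|t|^r - 1/h^r). Then ∫_{ℝ²} |V(w)|² e^{2β‖w‖^r} dw ≤ 4π² L e^{-2βδ} for all sufficiently small h > 0, where V(w) = J_h(‖w‖). -/
/-!
In polar coordinates the integral is `2π ∫ t J_h(t)² e^{2βt^r} dt`, and the weight cancels one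
factor `e^{-2βt^r}` of `J_h²`. On the support of `J(t^r - h^{-r})` the radius lies between
`t₁ = (h^{-r} + δ)^{1/r}` and `t₂ = (h^{-r} + D - δ)^{1/r}`; bounding `J² ≤ 1` and
`t ≤ t₂^{2-r} t^{r-1}` (as `r ≤ 2`) leaves the exact integral of `t^{r-1} e^{-2βt^r}`.
The result is `4π²L e^{-2βδ}` times `(1 + (D - δ) h^r)^{(2-r)/r} (1 - e^{-2β(D-2δ)})`, and this
factor tends to `1 - e^{-2β(D-2δ)} < 1` as `h → 0`.
-/

open MeasureTheory Real Filter Set Topology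

theorem integral_fun_norm_euclideanSpace_fin_two (f : ℝ → ℝ) :
    ∫ w : EuclideanSpace ℝ (Fin 2), f ‖w‖ = 2 * π * ∫ t in Ioi 0, t * f t := by
  have hvol : volume.real (Metric.ball (0 : EuclideanSpace ℝ (Fin 2)) 1) = π := by
    simp [measureReal_def, EuclideanSpace.volume_ball, Real.sq_sqrt pi_nonneg, one_add_one_eq_two,
      pi_nonneg]
  rw [integral_fun_norm_addHaar volume f, finrank_euclideanSpace_fin, hvol]
  simp only [nsmul_eq_mul, smul_eq_mul]
  norm_num
  ring

theorem integral_rpow_sub_one_mul_exp_neg_mul_rpow {a b r c : ℝ} (ha : 0 < a) (hb : 0 < b)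
    (hr : r ≠ 0) (hc : c ≠ 0) :
    ∫ t in a..b, t ^ (r - 1) * exp (-c * t ^ r) =
      (exp (-c * a ^ r) - exp (-c * b ^ r)) / (c * r) := by
  have hpos : ∀ t ∈ uIcc a b, 0 < t := fun t ht =>
    (lt_min ha hb).trans_le (by simpa only [uIcc, mem_Icc] using ht.1)
  have hderiv : ∀ t ∈ uIcc a b, HasDerivAt (fun x => exp (-c * x ^ r) / -(c * r))
      (t ^ (r - 1) * exp (-c * t ^ r)) t := by
    intro t ht
    refine ((((hasDerivAt_rpow_const (Or.inl (hpos t ht).ne')).const_mul (-c)).exp).div_const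
      (-(c * r))).congr_deriv ?_
    field_simp
  have hcont : ContinuousOn (fun t => t ^ (r - 1) * exp (-c * t ^ r)) (uIcc a b) := by
    intro t ht
    have h0 := (hpos t ht).ne'
    fun_prop (disch := exact Or.inl h0)
  rw [intervalIntegral.integral_eq_sub_of_hasDerivAt hderiv hcont.intervalIntegrable]
  ring

theorem le_rpow_two_sub_mul_rpow_sub_one {t T r : ℝ} (ht : 0 < t) (htT : t ≤ T) (hr : r ≤ 2) :
    t ≤ T ^ (2 - r) * t ^ (r - 1) := calc
  t = t ^ (2 - r) * t ^ (r - 1) := by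
    rw [← rpow_add ht, show 2 - r + (r - 1) = 1 by ring, rpow_one]
  _ ≤ T ^ (2 - r) * t ^ (r - 1) := by gcongr

theorem mem_Icc_rpow_inv_of_rpow_mem_Icc {t a b r : ℝ} (ht : 0 ≤ t) (ha : 0 ≤ a) (hr : 0 < r)
    (htr : t ^ r ∈ Icc a b) : t ∈ Icc (a ^ r⁻¹) (b ^ r⁻¹) :=
  ⟨(rpow_inv_le_iff_of_pos ha ht hr).2 htr.1,
    (le_rpow_inv_iff_of_pos ht (ha.trans (htr.1.trans htr.2)) hr).2 htr.2⟩

theorem setIntegral_Ioi_mul_exp_neg_mul_rpow_le {f : ℝ → ℝ} {a b r c : ℝ} (ha : 0 < a)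
    (hab : a ≤ b) (hr0 : 0 < r) (hr2 : r ≤ 2) (hc : c ≠ 0) (hf0 : ∀ t, 0 ≤ f t)
    (hf1 : ∀ t, f t ≤ 1) (hf_supp : ∀ t, 0 < t → t ^ r ∉ Icc a b → f t = 0) :
    ∫ t in Ioi 0, t * f t * exp (-c * t ^ r) ≤
      b ^ ((2 - r) / r) * ((exp (-c * a) - exp (-c * b)) / (c * r)) := by
  set t₁ := a ^ r⁻¹
  set t₂ := b ^ r⁻¹
  have ht₁ : 0 < t₁ := rpow_pos_of_pos ha _
  have ht₁₂ : t₁ ≤ t₂ := rpow_le_rpow ha.le hab (inv_nonneg.2 hr0.le)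
  have ht₂ : t₂ ^ (2 - r) = b ^ ((2 - r) / r) := by
    rw [← rpow_mul (ha.le.trans hab), inv_mul_eq_div]
  let g : ℝ → ℝ := fun t => b ^ ((2 - r) / r) * (t ^ (r - 1) * exp (-c * t ^ r))
  have hg : ContinuousOn g (Icc t₁ t₂) := fun t ht => by
    have h0 : t ≠ 0 := (ht₁.trans_le ht.1).ne'
    fun_prop (disch := exact Or.inl h0)
  have hle : ∀ t ∈ Ioi (0 : ℝ), t * f t * exp (-c * t ^ r) ≤ (Icc t₁ t₂).indicator g t := by
    intro t (ht : 0 < t)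
    by_cases hmem : t ∈ Icc t₁ t₂
    · rw [indicator_of_mem hmem]
      simp only [g, ← ht₂]
      calc t * f t * exp (-c * t ^ r) ≤ t * exp (-c * t ^ r) := by
            gcongr; exact mul_le_of_le_one_right ht.le (hf1 t)
        _ ≤ t₂ ^ (2 - r) * (t ^ (r - 1) * exp (-c * t ^ r)) := by
            rw [← mul_assoc]; gcongr; exact le_rpow_two_sub_mul_rpow_sub_one ht hmem.2 hr2
    · rw [indicator_of_notMem hmem, hf_supp t ht
        (fun h => hmem (mem_Icc_rpow_inv_of_rpow_mem_Icc ht.le ha.le hr0 h))]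
      simp
  have hg_int : Integrable ((Icc t₁ t₂).indicator g) :=
    (hg.integrableOn_compact isCompact_Icc).integrable_indicator measurableSet_Icc
  calc ∫ t in Ioi 0, t * f t * exp (-c * t ^ r) ≤ ∫ t in Ioi 0, (Icc t₁ t₂).indicator g t :=
        integral_mono_of_nonneg
          (ae_restrict_of_forall_mem measurableSet_Ioi fun t (ht : 0 < t) => by
            have := hf0 t; positivity)
          hg_int.integrableOn (ae_restrict_of_forall_mem measurableSet_Ioi hle)
    _ = ∫ t in t₁..t₂, g t := by
        rw [setIntegral_indicator measurableSet_Icc,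
          inter_eq_self_of_subset_right (Icc_subset_Ioi_iff ht₁₂ |>.2 ht₁),
          integral_Icc_eq_integral_Ioc, intervalIntegral.integral_of_le ht₁₂]
    _ = _ := by
        rw [intervalIntegral.integral_const_mul,
          integral_rpow_sub_one_mul_exp_neg_mul_rpow ht₁ (ht₁.trans_le ht₁₂) hr0.ne' hc,
          rpow_inv_rpow ha.le hr0.ne', rpow_inv_rpow (ha.le.trans hab) hr0.ne']

theorem rpow_mul_rpow_div {x y r : ℝ} (q : ℝ) (hx : 0 < x) (hy : 0 ≤ y) (hr : r ≠ 0) :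
    (x ^ r * y) ^ (q / r) = x ^ q * y ^ (q / r) := by
  rw [mul_rpow (rpow_nonneg hx.le r) hy, ← rpow_mul hx.le, mul_div_cancel₀ q hr]

theorem exp_mul_sub_exp_shift (c s δ E : ℝ) :
    exp (c * s) * (exp (-c * (s + δ)) - exp (-c * (s + E))) =
      exp (-c * δ) * (1 - exp (-c * (E - δ))) := by
  simp only [mul_sub, ← exp_add, mul_one]
  ring_nf

theorem sq_mul_exp_of_profile {κ h β r s x : ℝ} (hκ : 0 ≤ κ) (hh : 0 ≤ h) :
    (2 * √κ * h ^ (1 - r / 2) * exp (β / h ^ r) * exp (-2 * β * s) * x) ^ 2 *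
        exp (2 * β * s) =
      4 * κ * h ^ (2 - r) * exp (2 * β * (1 / h ^ r)) * (x ^ 2 * exp (-(2 * β) * s)) := by
  have hpow : (h ^ (1 - r / 2)) ^ 2 = h ^ (2 - r) := by
    rw [← rpow_natCast, ← rpow_mul hh]; norm_num; ring_nf
  have hexp : exp (β / h ^ r) ^ 2 * exp (-2 * β * s) ^ 2 * exp (2 * β * s) =
      exp (2 * β * (1 / h ^ r)) * exp (-(2 * β) * s) := by
    simp only [← exp_nat_mul, ← exp_add]; ring_nf
  calc _ = 4 * √κ ^ 2 * (h ^ (1 - r / 2)) ^ 2 *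
        (exp (β / h ^ r) ^ 2 * exp (-2 * β * s) ^ 2 * exp (2 * β * s)) * x ^ 2 := by ring
    _ = _ := by rw [sq_sqrt hκ, hpow, hexp]; ring

theorem eventually_one_add_mul_rpow_rpow_mul_lt_one {r K : ℝ} (hr : 0 < r) (A p : ℝ)
    (hK : K < 1) : ∀ᶠ h in 𝓝 0, (1 + A * h ^ r) ^ p * K < 1 := by
  have hcont : ContinuousAt (fun h : ℝ => (1 + A * h ^ r) ^ p * K) 0 :=
    ((continuousAt_const.add (continuousAt_const.mul
      (continuousAt_rpow_const 0 r (Or.inr hr.le)))).rpow_const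
        (Or.inl (by simp [zero_rpow hr.ne']))).mul continuousAt_const
  exact hcont.eventually_lt continuousAt_const (by simpa [zero_rpow hr.ne'] using hK)

theorem setIntegral_Ioi_profile_sq_mul_exp {β L r h : ℝ} {J : ℝ → ℝ} {Jh : ℝ → ℝ → ℝ}
    (hκ : 0 ≤ π * β * r * L) (hh : 0 ≤ h)
    (hJh : ∀ t, Jh h t = 2 * √(π * β * r * L) * h ^ (1 - r / 2) *
        exp (β / h ^ r) * exp (-2 * β * |t| ^ r) * J (|t| ^ r - 1 / h ^ r)) :
    ∫ t in Ioi 0, t * (Jh h t ^ 2 * exp (2 * β * t ^ r)) =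
      4 * (π * β * r * L) * h ^ (2 - r) * exp (2 * β * (1 / h ^ r)) *
        ∫ t in Ioi 0, t * J (t ^ r - 1 / h ^ r) ^ 2 * exp (-(2 * β) * t ^ r) := by
  rw [← integral_const_mul]
  refine setIntegral_congr_fun measurableSet_Ioi fun t (ht : 0 < t) => ?_
  rw [hJh, abs_of_pos ht, sq_mul_exp_of_profile hκ hh]
  ring

theorem integral_profile_sq_mul_exp_le {β L r δ D h : ℝ} {J : ℝ → ℝ} {Jh : ℝ → ℝ → ℝ}
    (hβ : 0 < β) (hL : 0 < L) (hr0 : 0 < r) (hr2 : r ≤ 2) (hδ : 0 < δ) (hD : 4 * δ < D)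
    (hJ0 : ∀ u, 0 ≤ J u) (hJ1 : ∀ u, J u ≤ 1) (hJsupp : ∀ u, u ∉ Icc δ (D - δ) → J u = 0)
    (hh : 0 < h)
    (hJh : ∀ t, Jh h t = 2 * √(π * β * r * L) * h ^ (1 - r / 2) *
        exp (β / h ^ r) * exp (-2 * β * |t| ^ r) * J (|t| ^ r - 1 / h ^ r)) :
    ∫ w : EuclideanSpace ℝ (Fin 2), Jh h ‖w‖ ^ 2 * exp (2 * β * ‖w‖ ^ r) ≤
      4 * π ^ 2 * L * exp (-2 * β * δ) *
        ((1 + (D - δ) * h ^ r) ^ ((2 - r) / r) * (1 - exp (-(2 * β) * (D - δ - δ)))) := by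
  set s := 1 / h ^ r
  have hs : 0 < s := by positivity
  have hradial := setIntegral_Ioi_mul_exp_neg_mul_rpow_le (f := fun t => J (t ^ r - s) ^ 2)
    (a := s + δ) (b := s + (D - δ)) (c := 2 * β) (by positivity) (by linarith) hr0 hr2
    (by positivity) (fun t => sq_nonneg _) (fun t => pow_le_one₀ (hJ0 _) (hJ1 _))
    (fun t _ hnot => by
      rw [hJsupp _ fun h => hnot ⟨by linarith [h.1], by linarith [h.2]⟩, zero_pow two_ne_zero])
  have hpow : h ^ (2 - r) * (s + (D - δ)) ^ ((2 - r) / r) =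
      (1 + (D - δ) * h ^ r) ^ ((2 - r) / r) := by
    rw [← rpow_mul_rpow_div _ hh (by linarith) hr0.ne']
    congr 1
    rw [mul_add, mul_one_div_cancel (by positivity)]
    ring
  rw [integral_fun_norm_euclideanSpace_fin_two (fun t => Jh h t ^ 2 * exp (2 * β * t ^ r)),
    setIntegral_Ioi_profile_sq_mul_exp (by positivity) hh.le hJh]
  calc _ ≤ 2 * π * (4 * (π * β * r * L) * h ^ (2 - r) * exp (2 * β * s) *
        ((s + (D - δ)) ^ ((2 - r) / r) *
          ((exp (-(2 * β) * (s + δ)) - exp (-(2 * β) * (s + (D - δ)))) / (2 * β * r)))) := by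
        gcongr
    _ = 2 * π * (4 * (π * β * r * L) / (2 * β * r)) *
          (h ^ (2 - r) * (s + (D - δ)) ^ ((2 - r) / r)) *
          (exp (2 * β * s) * (exp (-(2 * β) * (s + δ)) - exp (-(2 * β) * (s + (D - δ))))) := by
        ring
    _ = _ := by
        rw [hpow, exp_mul_sub_exp_shift]
        field_simp

theorem perturbation_class_bound_general (β L r δ D : ℝ) (hβ : 0 < β) (hL : 0 < L)
    (hr0 : 0 < r) (hr2 : r ≤ 2) (hδ : 0 < δ) (hD : 4 * δ < D)
    (J : ℝ → ℝ) (hJ0 : ∀ u, 0 ≤ J u) (hJ1 : ∀ u, J u ≤ 1)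
    (hJsupp : ∀ u, u ∉ Set.Icc δ (D - δ) → J u = 0)
    (Jh : ℝ → ℝ → ℝ)
    (hJh : ∀ h t, Jh h t = 2 * Real.sqrt (Real.pi * β * r * L) * h ^ (1 - r / 2) *
        Real.exp (β / h ^ r) * Real.exp (-2 * β * |t| ^ r) * J (|t| ^ r - 1 / h ^ r)) :
    ∀ᶠ h : ℝ in nhdsWithin 0 (Set.Ioi 0),
      ∫ w : EuclideanSpace ℝ (Fin 2), (Jh h ‖w‖) ^ 2 * Real.exp (2 * β * ‖w‖ ^ r) ≤
        4 * Real.pi ^ 2 * L * Real.exp (-2 * β * δ) := by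
  have hsmall := eventually_one_add_mul_rpow_rpow_mul_lt_one hr0 (D - δ) ((2 - r) / r)
    (sub_lt_self 1 (exp_pos (-(2 * β) * (D - δ - δ))))
  filter_upwards [eventually_nhdsWithin_of_eventually_nhds hsmall, self_mem_nhdsWithin]
    with h hsmall (hh : 0 < h)
  exact (integral_profile_sq_mul_exp_le hβ hL hr0 hr2 hδ hD hJ0 hJ1 hJsupp hh (hJh h)).trans
    (mul_le_of_le_one_right (by positivity) hsmall.le)

theorem perturbation_class_bound (β L r δ D : ℝ) (hβ : 0 < β) (hL : 0 < L)
    (hr0 : 0 < r) (hr2 : r ≤ 2) (hδ : 0 < δ) (hD : 4 * δ < D)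
    (J : ℝ → ℝ) (hJmeas : Measurable J) (hJ0 : ∀ u, 0 ≤ J u) (hJ1 : ∀ u, J u ≤ 1)
    (hJsupp : ∀ u, u ∉ Set.Icc δ (D - δ) → J u = 0)
    (Jh : ℝ → ℝ → ℝ)
    (hJh : ∀ h t, Jh h t = 2 * Real.sqrt (Real.pi * β * r * L) * h ^ (1 - r / 2) *
        Real.exp (β / h ^ r) * Real.exp (-2 * β * |t| ^ r) * J (|t| ^ r - 1 / h ^ r)) :
    ∀ᶠ h : ℝ in nhdsWithin 0 (Set.Ioi 0),
      ∫ w : EuclideanSpace ℝ (Fin 2), (Jh h ‖w‖) ^ 2 * Real.exp (2 * β * ‖w‖ ^ r) ≤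
        4 * Real.pi ^ 2 * L * Real.exp (-2 * β * δ) :=
  perturbation_class_bound_general β L r δ D hβ hL hr0 hr2 hδ hD J hJ0 hJ1 hJsupp Jh hJh
end

section
/- With the notation of the previous item, suppose additionally J(u) = 1 for u ∈ [2δ, D-2δ]. Then ((1/(2π)) ∫_ℝ |t| J_h(t) dt)² ≥ (L/(πβr)) h^{r-2} e^{-2β/h^r} [e^{-4βδ} - e^{-2β(D-2δ)}]² (1 + o(1)) as h → 0⁺. -/
/-!
Since `J_h(t)` depends only on `|t|`, the substitution `u = |t|^r` turns `∫ |t| J_h(t) dt` into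
`(2/r) C_h ∫₀^∞ u^q e^{-2βu} J(u - c) du` with `c = h^{-r}`, `q = 2/r - 1 ≥ 0` and `C_h` the
normalising constant of `J_h`. On the plateau `u ∈ [c + 2δ, c + D - 2δ]` we have `J = 1` and
`u^q ≥ c^q = h^{r-2}`, and integrating `e^{-2βu}` over it gives exactly the claimed lower bound, for
every `h > 0`. Since the support of `J(u - c)` lies in `[c + δ, c + D - δ]`, the same integral is at
most a constant times `c^q e^{-2βc}` once `c ≥ D - δ`, so the ratio is also bounded above as
`h → 0⁺`, without which the real `liminf` would be a junk value.
-/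

open MeasureTheory Real Filter Set Topology

theorem integral_Icc_exp_mul {k : ℝ} (hk : k ≠ 0) {a b : ℝ} (hab : a ≤ b) :
    ∫ u in Icc a b, exp (k * u) = (exp (k * b) - exp (k * a)) / k := by
  rw [integral_Icc_eq_integral_Ioc, ← intervalIntegral.integral_of_le hab,
    intervalIntegral.integral_comp_mul_left (fun x => exp x) hk, integral_exp, smul_eq_mul,
    inv_mul_eq_div]

theorem integral_Ioi_mul_comp_rpow (g : ℝ → ℝ) {r : ℝ} (hr : 0 < r) :
    ∫ s in Ioi 0, s * g (s ^ r) = r⁻¹ * ∫ u in Ioi 0, u ^ (2 / r - 1) * g u := by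
  rw [← integral_comp_rpow_Ioi_of_pos (g := fun u => u ^ (2 / r - 1) * g u) hr,
    ← integral_const_mul]
  refine setIntegral_congr_fun measurableSet_Ioi fun s (hs : 0 < s) => ?_
  have hpow : s ^ (r - 1) * (s ^ r) ^ (2 / r - 1) = s := by
    rw [← rpow_mul hs.le, ← rpow_add hs, mul_sub, mul_div_cancel₀ _ hr.ne']
    norm_num
  rw [smul_eq_mul, mul_assoc r, inv_mul_cancel_left₀ hr.ne', ← mul_assoc, hpow]

theorem integral_abs_mul_comp_abs_rpow (g : ℝ → ℝ) {r : ℝ} (hr : 0 < r) :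
    ∫ t, |t| * g (|t| ^ r) = 2 / r * ∫ u in Ioi 0, u ^ (2 / r - 1) * g u := by
  rw [integral_comp_abs (f := fun s => s * g (s ^ r)), integral_Ioi_mul_comp_rpow g hr]
  ring

theorem tendsto_one_div_rpow_nhdsGT_zero {r : ℝ} (hr : 0 < r) :
    Tendsto (fun h : ℝ => 1 / h ^ r) (𝓝[>] 0) atTop := by
  refine (tendsto_rpow_neg_nhdsGT_zero (neg_lt_zero.2 hr)).congr' ?_
  filter_upwards [self_mem_nhdsWithin] with h (hh : 0 < h)
  rw [rpow_neg hh.le, one_div]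

/-- The integrand of `∫ |t| J_h(t) dt` after the substitution `u = |t|^r`. -/
noncomputable def shiftedBump (q β c : ℝ) (J : ℝ → ℝ) (u : ℝ) : ℝ :=
  u ^ q * exp (-2 * β * u) * J (u - c)

section ShiftedBump

variable {q β δ D c : ℝ} {J : ℝ → ℝ}

lemma shiftedBump_eq_zero (hJsupp : ∀ u, u ∉ Icc δ (D - δ) → J u = 0) {u : ℝ}
    (hu : u ∉ Icc (c + δ) (c + (D - δ))) : shiftedBump q β c J u = 0 := by
  have hu' : u - c ∉ Icc δ (D - δ) := fun h => hu ⟨by linarith [h.1], by linarith [h.2]⟩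
  rw [shiftedBump, hJsupp _ hu', mul_zero]

lemma shiftedBump_nonneg (hcδ : 0 ≤ c + δ) (hJ0 : ∀ u, 0 ≤ J u)
    (hJsupp : ∀ u, u ∉ Icc δ (D - δ) → J u = 0) (u : ℝ) : 0 ≤ shiftedBump q β c J u := by
  by_cases hu : u ∈ Icc (c + δ) (c + (D - δ))
  · have : 0 ≤ u := hcδ.trans hu.1
    exact mul_nonneg (by positivity) (hJ0 _)
  · exact (shiftedBump_eq_zero hJsupp hu).ge

lemma shiftedBump_le_indicator (hq : 0 ≤ q) (hβ : 0 ≤ β) (hcδ : 0 ≤ c + δ)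
    (hJ1 : ∀ u, J u ≤ 1) (hJsupp : ∀ u, u ∉ Icc δ (D - δ) → J u = 0) (u : ℝ) :
    shiftedBump q β c J u ≤ (Icc (c + δ) (c + (D - δ))).indicator
      (fun _ => (c + (D - δ)) ^ q * exp (-2 * β * (c + δ))) u := by
  by_cases hu : u ∈ Icc (c + δ) (c + (D - δ))
  · rw [indicator_of_mem hu, shiftedBump]
    have hu0 : 0 ≤ u := hcδ.trans hu.1
    calc u ^ q * exp (-2 * β * u) * J (u - c) ≤ u ^ q * exp (-2 * β * u) * 1 := by
          gcongr; exact hJ1 _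
      _ ≤ (c + (D - δ)) ^ q * exp (-2 * β * (c + δ)) := by
          rw [mul_one]
          exact mul_le_mul (rpow_le_rpow hu0 hu.2 hq) (exp_le_exp.2 (by nlinarith [hu.1]))
            (exp_pos _).le (rpow_nonneg (hu0.trans hu.2) q)
  · rw [indicator_of_notMem hu, shiftedBump_eq_zero hJsupp hu]

lemma integrable_shiftedBump (hq : 0 ≤ q) (hβ : 0 ≤ β) (hcδ : 0 ≤ c + δ)
    (hJmeas : Measurable J) (hJ0 : ∀ u, 0 ≤ J u) (hJ1 : ∀ u, J u ≤ 1)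
    (hJsupp : ∀ u, u ∉ Icc δ (D - δ) → J u = 0) : Integrable (shiftedBump q β c J) := by
  have hmeas : Measurable (shiftedBump q β c J) :=
    ((measurable_id.pow_const q).mul (by fun_prop)).mul (hJmeas.comp (measurable_id.sub_const c))
  refine Integrable.mono' ?_ hmeas.aestronglyMeasurable (Eventually.of_forall fun u =>
    (norm_of_nonneg (shiftedBump_nonneg hcδ hJ0 hJsupp u)).trans_le
      (shiftedBump_le_indicator hq hβ hcδ hJ1 hJsupp u))
  exact continuous_const.integrableOn_Icc.integrable_indicator measurableSet_Icc

lemma le_integral_shiftedBump (hq : 0 ≤ q) (hβ : 0 < β) (hc : 0 ≤ c) (hδ : 0 < δ)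
    (hD : 4 * δ ≤ D) (hJmeas : Measurable J) (hJ0 : ∀ u, 0 ≤ J u) (hJ1 : ∀ u, J u ≤ 1)
    (hJsupp : ∀ u, u ∉ Icc δ (D - δ) → J u = 0)
    (hJone : ∀ u, u ∈ Icc (2 * δ) (D - 2 * δ) → J u = 1) :
    c ^ q * exp (-2 * β * c) * (exp (-4 * β * δ) - exp (-2 * β * (D - 2 * δ))) / (2 * β) ≤
      ∫ u in Ioi 0, shiftedBump q β c J u := by
  have hcδ : 0 ≤ c + δ := by linarith
  have hint := integrable_shiftedBump hq hβ.le hcδ hJmeas hJ0 hJ1 hJsupp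
  have hexp (x : ℝ) : exp (-2 * β * (c + x)) = exp (-2 * β * c) * exp (-2 * β * x) := by
    rw [← exp_add]; ring_nf
  calc c ^ q * exp (-2 * β * c) * (exp (-4 * β * δ) - exp (-2 * β * (D - 2 * δ))) / (2 * β)
      = ∫ u in Icc (c + 2 * δ) (c + (D - 2 * δ)), c ^ q * exp (-2 * β * u) := by
        rw [integral_const_mul, integral_Icc_exp_mul (by positivity) (by linarith), hexp, hexp,
          show -2 * β * (2 * δ) = -4 * β * δ by ring]
        field_simp
        ring
    _ ≤ ∫ u in Icc (c + 2 * δ) (c + (D - 2 * δ)), shiftedBump q β c J u := by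
        refine setIntegral_mono_on (continuous_const.mul (by fun_prop)).integrableOn_Icc
          hint.integrableOn measurableSet_Icc fun u hu => ?_
        rw [shiftedBump, hJone _ ⟨by linarith [hu.1], by linarith [hu.2]⟩, mul_one]
        exact mul_le_mul_of_nonneg_right (rpow_le_rpow hc (by linarith [hu.1] : c ≤ u) hq)
          (exp_pos _).le
    _ ≤ ∫ u in Ioi 0, shiftedBump q β c J u := by
        have hsub : Icc (c + 2 * δ) (c + (D - 2 * δ)) ⊆ Ioi 0 := fun u hu =>
          show 0 < u by linarith [hu.1]
        exact setIntegral_mono_set hint.integrableOn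
          (Eventually.of_forall (shiftedBump_nonneg hcδ hJ0 hJsupp)) hsub.eventuallyLE

lemma integral_shiftedBump_le (hq : 0 ≤ q) (hβ : 0 ≤ β) (hδ : 0 ≤ δ) (hD : 2 * δ ≤ D)
    (hc : D - δ ≤ c) (hJ0 : ∀ u, 0 ≤ J u) (hJ1 : ∀ u, J u ≤ 1)
    (hJsupp : ∀ u, u ∉ Icc δ (D - δ) → J u = 0) :
    ∫ u in Ioi 0, shiftedBump q β c J u ≤
      2 ^ q * (D - 2 * δ) * exp (-2 * β * δ) * (c ^ q * exp (-2 * β * c)) := by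
  have hcδ : 0 ≤ c + δ := by linarith
  set M := (c + (D - δ)) ^ q * exp (-2 * β * (c + δ)) with hM
  have hM0 : 0 ≤ M := mul_nonneg (rpow_nonneg (by linarith) q) (exp_pos _).le
  have hind : Integrable ((Icc (c + δ) (c + (D - δ))).indicator fun _ => M) :=
    continuous_const.integrableOn_Icc.integrable_indicator measurableSet_Icc
  calc ∫ u in Ioi 0, shiftedBump q β c J u
      ≤ ∫ u in Ioi 0, (Icc (c + δ) (c + (D - δ))).indicator (fun _ => M) u :=
        integral_mono_of_nonneg (Eventually.of_forall (shiftedBump_nonneg hcδ hJ0 hJsupp))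
          hind.integrableOn (Eventually.of_forall (shiftedBump_le_indicator hq hβ hcδ hJ1 hJsupp))
    _ ≤ ∫ u, (Icc (c + δ) (c + (D - δ))).indicator (fun _ => M) u :=
        setIntegral_le_integral hind (Eventually.of_forall fun u =>
          indicator_nonneg (fun _ _ => hM0) u)
    _ = (D - 2 * δ) * M := by
        rw [integral_indicator_const _ measurableSet_Icc, measureReal_def, Real.volume_Icc,
          ENNReal.toReal_ofReal (by linarith), smul_eq_mul]
        ring_nf
    _ ≤ 2 ^ q * (D - 2 * δ) * exp (-2 * β * δ) * (c ^ q * exp (-2 * β * c)) := by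
        have hbase : (c + (D - δ)) ^ q ≤ 2 ^ q * c ^ q := by
          rw [← mul_rpow zero_le_two (by linarith)]
          exact rpow_le_rpow (by linarith) (by linarith) hq
        have hexp : exp (-2 * β * (c + δ)) = exp (-2 * β * δ) * exp (-2 * β * c) := by
          rw [← exp_add]; ring_nf
        rw [hM, hexp]
        have : 0 ≤ D - 2 * δ := by linarith
        calc (D - 2 * δ) * ((c + (D - δ)) ^ q * (exp (-2 * β * δ) * exp (-2 * β * c)))
            ≤ (D - 2 * δ) * ((2 ^ q * c ^ q) * (exp (-2 * β * δ) * exp (-2 * β * c))) := by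
              gcongr
          _ = _ := by ring

end ShiftedBump

theorem integral_abs_mul_exp_mul_comp_abs_rpow (A β c : ℝ) {r : ℝ} (hr : 0 < r) (J : ℝ → ℝ) :
    ∫ t, |t| * (A * exp (-2 * β * |t| ^ r) * J (|t| ^ r - c)) =
      2 / r * A * ∫ u in Ioi 0, shiftedBump (2 / r - 1) β c J u := by
  rw [integral_abs_mul_comp_abs_rpow (fun u => A * exp (-2 * β * u) * J (u - c)) hr, mul_assoc,
    ← integral_const_mul A]
  congr 2
  funext u
  rw [shiftedBump]
  ring

theorem separation_ratio_eq_sq {β r L h E : ℝ} (hβ : 0 < β) (hr : 0 < r) (hL : 0 < L)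
    (hh : 0 < h) (hE : E ≠ 0) (K : ℝ) :
    ((1 / (2 * π)) * (2 / r * (2 * √(π * β * r * L) * h ^ (1 - r / 2) * exp (β / h ^ r)) * K)) ^ 2 /
        ((L / (π * β * r)) * h ^ (r - 2) * exp (-2 * β / h ^ r) * E ^ 2) =
      (2 * β * K / (E * ((1 / h ^ r) ^ (2 / r - 1) * exp (-2 * β * (1 / h ^ r))))) ^ 2 := by
  have hpow : (1 / h ^ r) ^ (2 / r - 1) = h ^ (r - 2) := by
    rw [one_div, ← rpow_neg hh.le, ← rpow_mul hh.le]
    congr 1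
    field_simp
    ring
  have hsq : (h ^ (1 - r / 2)) ^ 2 * h ^ (r - 2) = 1 := by
    rw [← rpow_natCast, ← rpow_mul hh.le, ← rpow_add hh]
    norm_num [show (1 - r / 2) * 2 + (r - 2) = 0 by ring]
  have hexp : exp (β / h ^ r) ^ 2 * exp (-2 * β / h ^ r) = 1 := by
    rw [← exp_nat_mul, ← exp_add]; ring_nf; exact exp_zero
  have hsqrt : √(π * β * r * L) ^ 2 = π * β * r * L := sq_sqrt (by positivity)
  rw [hpow, show -2 * β * (1 / h ^ r) = -2 * β / h ^ r by ring]
  have hx : 0 < h ^ (r - 2) := rpow_pos_of_pos hh _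
  -- freeze the `rpow`/`exp` atoms so that `field_simp` does not rewrite them
  generalize h ^ (1 - r / 2) = a at hsq ⊢
  generalize h ^ (r - 2) = x at hsq hx ⊢
  generalize exp (β / h ^ r) = e at hexp ⊢
  generalize exp (-2 * β / h ^ r) = f at hexp ⊢
  generalize √(π * β * r * L) = s at hsqrt ⊢
  have : f ≠ 0 := by rintro rfl; simp at hexp
  field_simp
  rw [hsqrt]
  linear_combination (π * β * r * L * K ^ 2 * e ^ 2 * f) * hsq + (π * β * r * L * K ^ 2) * hexp

theorem perturbation_separation_lower_bound (β L r δ D : ℝ) (hβ : 0 < β) (hL : 0 < L)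
    (hr0 : 0 < r) (hr2 : r ≤ 2) (hδ : 0 < δ) (hD : 4 * δ < D)
    (J : ℝ → ℝ) (hJmeas : Measurable J) (hJ0 : ∀ u, 0 ≤ J u) (hJ1 : ∀ u, J u ≤ 1)
    (hJsupp : ∀ u, u ∉ Set.Icc δ (D - δ) → J u = 0)
    (hJone : ∀ u, u ∈ Set.Icc (2 * δ) (D - 2 * δ) → J u = 1)
    (Jh : ℝ → ℝ → ℝ)
    (hJh : ∀ h t, Jh h t = 2 * Real.sqrt (Real.pi * β * r * L) * h ^ (1 - r / 2) *
        Real.exp (β / h ^ r) * Real.exp (-2 * β * |t| ^ r) * J (|t| ^ r - 1 / h ^ r)) :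
    1 ≤ Filter.liminf
        (fun h : ℝ =>
          ((1 / (2 * Real.pi)) * ∫ t : ℝ, |t| * Jh h t) ^ 2 /
            ((L / (Real.pi * β * r)) * h ^ (r - 2) * Real.exp (-2 * β / h ^ r) *
              (Real.exp (-4 * β * δ) - Real.exp (-2 * β * (D - 2 * δ))) ^ 2))
        (nhdsWithin 0 (Set.Ioi 0)) := by
  set E := exp (-4 * β * δ) - exp (-2 * β * (D - 2 * δ))
  have hE : 0 < E := sub_pos.2 (exp_lt_exp.2 (by nlinarith))
  have hq : 0 ≤ 2 / r - 1 := by rw [sub_nonneg, le_div_iff₀ hr0]; linarith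
  set ρ : ℝ → ℝ := fun h => 2 * β * (∫ u in Ioi 0, shiftedBump (2 / r - 1) β (1 / h ^ r) J u) /
    (E * ((1 / h ^ r) ^ (2 / r - 1) * exp (-2 * β * (1 / h ^ r))))
  have hρ : ∀ h > 0, ((1 / (2 * π)) * ∫ t, |t| * Jh h t) ^ 2 /
      ((L / (π * β * r)) * h ^ (r - 2) * exp (-2 * β / h ^ r) * E ^ 2) = ρ h ^ 2 := by
    intro h hh
    simp_rw [hJh]
    rw [integral_abs_mul_exp_mul_comp_abs_rpow _ _ _ hr0,
      separation_ratio_eq_sq hβ hr0 hL hh hE.ne']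
  have hlow : ∀ h > 0, 1 ≤ ρ h := by
    intro h hh
    rw [le_div_iff₀ (by positivity), one_mul]
    have := le_integral_shiftedBump hq hβ (c := 1 / h ^ r) (by positivity) hδ hD.le hJmeas hJ0 hJ1
      hJsupp hJone
    rw [div_le_iff₀ (by positivity)] at this
    linarith
  obtain ⟨B, hup⟩ : ∃ B, ∀ᶠ h in 𝓝[>] 0, ρ h ≤ B := by
    refine ⟨2 * β * (2 ^ (2 / r - 1) * (D - 2 * δ) * exp (-2 * β * δ)) / E, ?_⟩
    filter_upwards [self_mem_nhdsWithin,
      (tendsto_one_div_rpow_nhdsGT_zero hr0).eventually_ge_atTop (D - δ)] with h (hh : 0 < h) hcD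
    have := integral_shiftedBump_le hq hβ.le hδ.le (by linarith) hcD hJ0 hJ1 hJsupp
    rw [div_le_div_iff₀ (by positivity) hE]
    have := mul_le_mul_of_nonneg_left this (by positivity : 0 ≤ 2 * β * E)
    linarith
  refine le_liminf_of_le (isCoboundedUnder_ge_of_eventually_le _ (x := B ^ 2) ?_) ?_
  · filter_upwards [self_mem_nhdsWithin, hup] with h (hh : 0 < h) hρh
    rw [hρ h hh]
    exact pow_le_pow_left₀ (zero_le_one.trans (hlow h hh)) hρh 2
  · filter_upwards [self_mem_nhdsWithin] with h (hh : 0 < h)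
    rw [hρ h hh]
    exact one_le_pow₀ (hlow h hh)
end

section
/- Let p be a probability density on ℝ with p(x) ≥ c x^{-2} for all |x| ≥ 1 (with c > 0), and let N be the centered Gaussian density with variance σ² > 0. Then there exist c₁ > 0 and M > 0 such that the convolution (p * N)(y) ≥ c₁ y^{-2} for all |y| ≥ M. -/
/-!
For `|y| ≥ 2` restrict the integral to `|x| ≤ 1`. There `|y - x| ≥ 1` and `(y - x)² ≤ 4 y²`, so the
tail bound gives `p (y - x) ≥ c / (4 y²)`, while the Gaussian density is at least its value at `1`.
-/

open MeasureTheory Real ProbabilityTheory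
open scoped NNReal

theorem gaussianPDFReal_le_of_abs_sub_le {μ : ℝ} {v : ℝ≥0} {x x' : ℝ} (h : |x - μ| ≤ |x' - μ|) :
    gaussianPDFReal μ v x' ≤ gaussianPDFReal μ v x := by
  unfold gaussianPDFReal
  gcongr (√_)⁻¹ * rexp (-?_ / _)
  exact sq_le_sq.mpr h

theorem gaussianPDFReal_le_gaussianPDFReal_mean (μ : ℝ) (v : ℝ≥0) (x : ℝ) :
    gaussianPDFReal μ v x ≤ gaussianPDFReal μ v μ :=
  gaussianPDFReal_le_of_abs_sub_le (by simp)

theorem MeasureTheory.Integrable.mul_gaussianPDFReal {f : ℝ → ℝ} (hf : Integrable f) (μ : ℝ)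
    (v : ℝ≥0) : Integrable (fun x ↦ f x * gaussianPDFReal μ v x) :=
  hf.mul_bdd (measurable_gaussianPDFReal μ v).aestronglyMeasurable
    (.of_forall fun x ↦ by
      rw [norm_of_nonneg (gaussianPDFReal_nonneg μ v x)]
      exact gaussianPDFReal_le_gaussianPDFReal_mean μ v x)

theorem gaussianPDFReal_zero_toNNReal_sq (σ x : ℝ) :
    gaussianPDFReal 0 (σ ^ 2).toNNReal x =
      (√(2 * π * σ ^ 2))⁻¹ * rexp (-(x ^ 2) / (2 * σ ^ 2)) := by
  simp [gaussianPDFReal, Real.coe_toNNReal _ (sq_nonneg σ), neg_div]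

theorem mul_measureReal_le_integral_of_le_on {X : Type*} [MeasurableSpace X] {μ : Measure X}
    {f : X → ℝ} {s : Set X} {a : ℝ} (hf : Integrable f μ) (hf0 : 0 ≤ f) (hs : MeasurableSet s)
    (hμs : μ s ≠ ⊤) (ha : ∀ x ∈ s, a ≤ f x) : a * μ.real s ≤ ∫ x, f x ∂μ :=
  (setIntegral_ge_of_const_le_real hs hμs ha hf.integrableOn).trans
    (setIntegral_le_integral hf (.of_forall hf0))

theorem div_four_mul_sq_le_apply_sub {p : ℝ → ℝ} {c : ℝ} (hc : 0 ≤ c)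
    (htail : ∀ x : ℝ, 1 ≤ |x| → c / x ^ 2 ≤ p x) {x y : ℝ} (hy : 2 ≤ |y|) (hx : |x| ≤ 1) :
    c / (4 * y ^ 2) ≤ p (y - x) := by
  have hyx : 1 ≤ |y - x| := by linarith [abs_sub_abs_le_abs_sub y x]
  have hyx_sq_pos : 0 < (y - x) ^ 2 := by
    rw [← sq_abs]
    exact pow_pos (one_pos.trans_le hyx) 2
  refine le_trans (div_le_div_of_nonneg_left hc hyx_sq_pos ?_) (htail _ hyx)
  rw [← sq_abs (y - x), show 4 * y ^ 2 = (2 * |y|) ^ 2 by rw [mul_pow, sq_abs]; norm_num]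
  gcongr
  linarith [abs_sub y x]

theorem div_sq_le_integral_sub_mul_gaussianPDFReal {p : ℝ → ℝ} (hp0 : ∀ x, 0 ≤ p x)
    (hpint : Integrable p) {c : ℝ} (hc : 0 ≤ c) (htail : ∀ x : ℝ, 1 ≤ |x| → c / x ^ 2 ≤ p x)
    (v : ℝ≥0) {y : ℝ} (hy : 2 ≤ |y|) :
    c * gaussianPDFReal 0 v 1 / 2 / y ^ 2 ≤ ∫ x, p (y - x) * gaussianPDFReal 0 v x := by
  have hlow : ∀ x ∈ Set.Icc (-1 : ℝ) 1,
      c / (4 * y ^ 2) * gaussianPDFReal 0 v 1 ≤ p (y - x) * gaussianPDFReal 0 v x := fun x hx ↦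
    have hx1 : |x| ≤ 1 := abs_le.mpr hx
    mul_le_mul (div_four_mul_sq_le_apply_sub hc htail hy hx1)
      (gaussianPDFReal_le_of_abs_sub_le (by simpa using hx1)) (gaussianPDFReal_nonneg 0 v 1)
      (hp0 _)
  have hy0 : y ≠ 0 := by rintro rfl; norm_num at hy
  calc c * gaussianPDFReal 0 v 1 / 2 / y ^ 2
      = c / (4 * y ^ 2) * gaussianPDFReal 0 v 1 * volume.real (Set.Icc (-1 : ℝ) 1) := by
        rw [Real.volume_real_Icc_of_le (by norm_num)]; field_simp; ring
    _ ≤ ∫ x, p (y - x) * gaussianPDFReal 0 v x :=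
        mul_measureReal_le_integral_of_le_on ((hpint.comp_sub_left y).mul_gaussianPDFReal 0 v)
          (fun x ↦ mul_nonneg (hp0 _) (gaussianPDFReal_nonneg 0 v x)) measurableSet_Icc
          measure_Icc_lt_top.ne hlow

theorem gaussian_convolution_tail_lower_bound_general (p : ℝ → ℝ)
    (hp0 : ∀ x, 0 ≤ p x) (hpint : Integrable p)
    (c : ℝ) (hc : 0 < c) (htail : ∀ x : ℝ, 1 ≤ |x| → c / x ^ 2 ≤ p x)
    (σ : ℝ) (hσ : 0 < σ) :
    ∃ c₁ M : ℝ, 0 < c₁ ∧ 0 < M ∧ ∀ y : ℝ, M ≤ |y| →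
      c₁ / y ^ 2 ≤
        ∫ x : ℝ, p (y - x) * ((Real.sqrt (2 * Real.pi * σ ^ 2))⁻¹ * Real.exp (-(x ^ 2) / (2 * σ ^ 2))) := by
  have hv : (σ ^ 2).toNNReal ≠ 0 := by simpa using hσ.ne'
  refine ⟨c * gaussianPDFReal 0 (σ ^ 2).toNNReal 1 / 2, 2,
    div_pos (mul_pos hc (gaussianPDFReal_pos 0 _ 1 hv)) two_pos, two_pos, fun y hy ↦ ?_⟩
  simp_rw [← gaussianPDFReal_zero_toNNReal_sq]
  exact div_sq_le_integral_sub_mul_gaussianPDFReal hp0 hpint hc.le htail _ hy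

theorem gaussian_convolution_tail_lower_bound (p : ℝ → ℝ) (hpmeas : Measurable p)
    (hp0 : ∀ x, 0 ≤ p x) (hpint : Integrable p) (hp1 : ∫ x : ℝ, p x = 1)
    (c : ℝ) (hc : 0 < c) (htail : ∀ x : ℝ, 1 ≤ |x| → c / x ^ 2 ≤ p x)
    (σ : ℝ) (hσ : 0 < σ) :
    ∃ c₁ M : ℝ, 0 < c₁ ∧ 0 < M ∧ ∀ y : ℝ, M ≤ |y| →
      c₁ / y ^ 2 ≤
        ∫ x : ℝ, p (y - x) * ((Real.sqrt (2 * Real.pi * σ ^ 2))⁻¹ * Real.exp (-(x ^ 2) / (2 * σ ^ 2))) :=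
  gaussian_convolution_tail_lower_bound_general p hp0 hpint c hc htail σ hσ
end
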